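/- arXiv:2501.03017 — 7 statements merged into one kernel-verified Lean document; each statement's English description precedes it below -/
import Mathlib

section
/- Let f_ex : ℝ² → ℝ be defined by f_ex(x₁,x₂) = ReLU(−ReLU(x₁) + ReLU(x₂) − 1) + ReLU(2·ReLU(x₁) + ReLU(x₂) − 0.5), where ReLU(t) = max(t,0). Then f_ex is a convex function on ℝ². -/
/-- The ReLU function. -/
noncomputable def relu (t : ℝ) : ℝ := max t 0

/-- The function `f_ex` implemented by a ReLU network with two hidden layers of two
neurons each: first-layer weights the identity, second-layer weights ((-1,1),(2,1)),
second-layer biases (-1,-0.5), output weights (1,1). -/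
noncomputable def fEx (x : Fin 2 → ℝ) : ℝ :=
  relu (-(relu (x 0)) + relu (x 1) - 1) + relu (2 * relu (x 0) + relu (x 1) - 0.5)

lemma relu_convex : ConvexOn ℝ Set.univ relu :=
  (convexOn_id convex_univ).sup (convexOn_const 0 convex_univ)

lemma coord_relu_convex (i : Fin 2) :
    ConvexOn ℝ Set.univ (fun x : Fin 2 → ℝ => relu (x i)) := by
  refine ⟨convex_univ, ?_⟩
  intro x _ y _ a b ha hb hab
  have := relu_convex.2 (Set.mem_univ (x i)) (Set.mem_univ (y i)) ha hb hab
  simpa using this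

lemma key (u v : ℝ) (hu : 0 ≤ u) (hv : 0 ≤ v) :
    relu (-u + v - 1) + relu (2 * u + v - 0.5)
      = max 0 (max (2 * u + v - 0.5) (u + 2 * v - 1.5)) := by
  simp only [relu, max_def]
  split_ifs <;> linarith

noncomputable def gEx (x : Fin 2 → ℝ) : ℝ :=
  max 0 (max (2 * relu (x 0) + relu (x 1) - 0.5) (relu (x 0) + 2 * relu (x 1) - 1.5))

lemma gEx_convex : ConvexOn ℝ Set.univ gEx := by
  have h0 := coord_relu_convex 0
  have h1 := coord_relu_convex 1
  have c1 : ConvexOn ℝ Set.univ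
      (fun x : Fin 2 → ℝ => 2 * relu (x 0) + relu (x 1) - 0.5) := by
    have := ((h0.smul (by norm_num : (0:ℝ) ≤ 2)).add h1).add
      (convexOn_const (-0.5) convex_univ)
    simpa [smul_eq_mul, sub_eq_add_neg, Pi.add_def] using this
  have c2 : ConvexOn ℝ Set.univ
      (fun x : Fin 2 → ℝ => relu (x 0) + 2 * relu (x 1) - 1.5) := by
    have := (h0.add (h1.smul (by norm_num : (0:ℝ) ≤ 2))).add
      (convexOn_const (-1.5) convex_univ)
    simpa [smul_eq_mul, sub_eq_add_neg, Pi.add_def] using this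
  exact (convexOn_const 0 convex_univ).sup (c1.sup c2)

/-- `f_ex` is convex on `ℝ²`. -/
theorem fEx_convex : ConvexOn ℝ Set.univ fEx := by
  have : fEx = gEx := by
    funext x
    exact key (relu (x 0)) (relu (x 1)) (le_max_right _ _) (le_max_right _ _)
  rw [this]
  exact gEx_convex
end

section
/- Let f_θ : ℝ^d → ℝ be the one-hidden-layer ReLU network f_θ(x) = w₂ᵀ ReLU(W₁ x + b₁) + b₂, with W₁ ∈ ℝ^{n×d}, b₁, w₂ ∈ ℝ^n, b₂ ∈ ℝ. Assume f_θ is convex on ℝ^d. Then for every isolated hidden neuron ν ∈ {1,…,n} (i.e. 𝔛_ν ≠ ∅), the corresponding output weight is nonnegative: w₂[ν] ≥ 0. -/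
open Set Metric
open scoped RealInnerProductSpace

/-- The (binary) activation associated to a pre-activation `z` is constant on a set `s`
if the sign condition `0 < z y` is the same for all points of `s`. -/
def ActConstOn {E : Type*} (z : E → ℝ) (s : Set E) : Prop :=
  ∀ y ∈ s, ∀ y' ∈ s, ((0 < z y) ↔ (0 < z y'))

/-- `𝔛 ν`: the set of inputs `x` such that, on every small enough ball around `x`,
the activation of every hidden neuron `μ ≠ ν` is constant while the activation of `ν`
is not constant.  A neuron `ν` is isolated when this set is nonempty. -/
def Xiso {ι E : Type*} [PseudoMetricSpace E] (z : ι → E → ℝ) (ν : ι) : Set E :=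
  {x | ∃ ε₀ > (0 : ℝ), ∀ ε : ℝ, 0 < ε → ε ≤ ε₀ →
    (∀ μ, μ ≠ ν → ActConstOn (z μ) (Metric.ball x ε)) ∧
    ¬ ActConstOn (z ν) (Metric.ball x ε)}

/-- Non-negativity of the last layer: if the one-hidden-layer ReLU network
`f(x) = w₂ᵀ ReLU(W₁ x + b₁) + b₂` is convex on `ℝ^d`, then for every isolated hidden
neuron `ν` (i.e. `𝔛 ν ≠ ∅`), the output weight `w₂ ν` is nonnegative. -/
theorem lastLayer_nonneg_of_convex {d n : ℕ}
    (W₁ : Fin n → EuclideanSpace ℝ (Fin d)) (b₁ w₂ : Fin n → ℝ) (b₂ : ℝ)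
    (hconv : ConvexOn ℝ Set.univ (fun x : EuclideanSpace ℝ (Fin d) =>
      ∑ ν, w₂ ν * relu (⟪W₁ ν, x⟫ + b₁ ν) + b₂))
    (ν : Fin n)
    (hiso : (Xiso (fun μ (x : EuclideanSpace ℝ (Fin d)) => ⟪W₁ μ, x⟫ + b₁ μ) ν).Nonempty) :
    0 ≤ w₂ ν := by
  obtain ⟨x, ε₀, hε₀, hprop⟩ := hiso
  obtain ⟨hconst, hnot⟩ := hprop ε₀ hε₀ le_rfl
  set w : EuclideanSpace ℝ (Fin d) := W₁ ν with hw
  -- w ≠ 0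
  have hwne : w ≠ 0 := by
    intro h0
    have hW0 : W₁ ν = 0 := hw ▸ h0
    apply hnot
    intro y _ y' _
    simp [hW0]
  have hwnorm : (0:ℝ) < ‖w‖ := norm_pos_iff.mpr hwne
  -- membership of perturbed points
  have hmem : ∀ s : ℝ, ∀ ε : ℝ, |s| * ‖w‖ < ε → x + s • w ∈ Metric.ball x ε := by
    intro s ε hs
    rw [Metric.mem_ball, dist_eq_norm, add_sub_cancel_left, norm_smul, Real.norm_eq_abs]
    exact hs
  have hz : ∀ μ : Fin n, ∀ s : ℝ,
      ⟪W₁ μ, x + s • w⟫ = ⟪W₁ μ, x⟫ + s * ⟪W₁ μ, w⟫ := by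
    intro μ s
    rw [inner_add_right, real_inner_smul_right]
  -- z_ν x = 0
  have hc : ⟪w, x⟫ + b₁ ν = 0 := by
    by_contra hc0
    set c : ℝ := ⟪w, x⟫ + b₁ ν with hcdef
    have hcabs : 0 < |c| := abs_pos.mpr hc0
    set ε : ℝ := min ε₀ (|c| / (2 * ‖w‖)) with hεdef
    have hεpos : 0 < ε := lt_min hε₀ (by positivity)
    have hεle : ε ≤ ε₀ := min_le_left _ _
    have hbound : ∀ y ∈ Metric.ball x ε, |(⟪w, y⟫ + b₁ ν) - c| < |c| / 2 := by
      intro y hy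
      have h1 : (⟪w, y⟫ + b₁ ν) - c = ⟪w, y - x⟫ := by
        rw [inner_sub_right]; ring
      rw [h1]
      calc |⟪w, y - x⟫| ≤ ‖w‖ * ‖y - x‖ := abs_real_inner_le_norm _ _
        _ < ‖w‖ * ε := by
            apply mul_lt_mul_of_pos_left _ hwnorm
            rw [← dist_eq_norm]; exact Metric.mem_ball.mp hy
        _ ≤ ‖w‖ * (|c| / (2 * ‖w‖)) := by
            apply mul_le_mul_of_nonneg_left (min_le_right _ _) hwnorm.le
        _ = |c| / 2 := by field_simp
    apply (hprop ε hεpos hεle).2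
    intro y hy y' hy'
    have h1 := abs_lt.mp (hbound y hy)
    have h2 := abs_lt.mp (hbound y' hy')
    show (0 < ⟪w, y⟫ + b₁ ν) ↔ (0 < ⟪w, y'⟫ + b₁ ν)
    rcases lt_or_gt_of_ne hc0 with hneg | hpos
    · have hca : |c| = -c := abs_of_neg hneg
      rw [hca] at h1 h2
      constructor <;> intro h <;> linarith [h1.1, h1.2, h2.1, h2.2]
    · have hca : |c| = c := abs_of_pos hpos
      rw [hca] at h1 h2
      constructor <;> intro _ <;> linarith [h1.1, h1.2, h2.1, h2.2]
  -- take t, points p q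
  set t : ℝ := ε₀ / (2 * ‖w‖) with htdef
  have ht : 0 < t := by positivity
  have htw : |t| * ‖w‖ < ε₀ := by
    rw [abs_of_pos ht, htdef]
    have hne : ‖w‖ ≠ 0 := ne_of_gt hwnorm
    have heq : ε₀ / (2 * ‖w‖) * ‖w‖ = ε₀ / 2 := by
      field_simp
    rw [heq]; linarith
  set p := x + t • w with hp
  set q := x + (-t) • w with hq
  have hpmem : p ∈ Metric.ball x ε₀ := hmem t ε₀ htw
  have hqmem : q ∈ Metric.ball x ε₀ := hmem (-t) ε₀ (by rwa [abs_neg])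
  have hxmem : x ∈ Metric.ball x ε₀ := Metric.mem_ball_self hε₀
  -- convexity gives midpoint inequality
  have hmid : (fun y : EuclideanSpace ℝ (Fin d) =>
        ∑ μ, w₂ μ * relu (⟪W₁ μ, y⟫ + b₁ μ) + b₂) x ≤
      (1/2 : ℝ) * ((fun y : EuclideanSpace ℝ (Fin d) =>
        ∑ μ, w₂ μ * relu (⟪W₁ μ, y⟫ + b₁ μ) + b₂) p) +
      (1/2 : ℝ) * ((fun y : EuclideanSpace ℝ (Fin d) =>
        ∑ μ, w₂ μ * relu (⟪W₁ μ, y⟫ + b₁ μ) + b₂) q) := by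
    have h := hconv.2 (Set.mem_univ p) (Set.mem_univ q)
      (by norm_num : (0:ℝ) ≤ 1/2) (by norm_num : (0:ℝ) ≤ 1/2) (by norm_num)
    have hcomb : (1/2 : ℝ) • p + (1/2 : ℝ) • q = x := by
      rw [hp, hq]; module
    rw [hcomb] at h
    simpa [smul_eq_mul] using h
  simp only at hmid
  -- termwise analysis
  have hterm : ∀ μ : Fin n, μ ≠ ν →
      w₂ μ * relu (⟪W₁ μ, p⟫ + b₁ μ) + w₂ μ * relu (⟪W₁ μ, q⟫ + b₁ μ)
        - 2 * (w₂ μ * relu (⟪W₁ μ, x⟫ + b₁ μ)) = 0 := by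
    intro μ hμ
    have hac := hconst μ hμ
    have hsum : (⟪W₁ μ, p⟫ + b₁ μ) + (⟪W₁ μ, q⟫ + b₁ μ)
        = 2 * (⟪W₁ μ, x⟫ + b₁ μ) := by
      rw [hp, hq, hz, hz]; ring
    by_cases hact : 0 < ⟪W₁ μ, x⟫ + b₁ μ
    · have h1 : 0 < ⟪W₁ μ, p⟫ + b₁ μ := (hac p hpmem x hxmem).mpr hact
      have h2 : 0 < ⟪W₁ μ, q⟫ + b₁ μ := (hac q hqmem x hxmem).mpr hact
      rw [relu, relu, relu, max_eq_left h1.le, max_eq_left h2.le, max_eq_left hact.le]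
      linear_combination w₂ μ * hsum
    · have h1 : ¬ (0 < ⟪W₁ μ, p⟫ + b₁ μ) := fun h => hact ((hac p hpmem x hxmem).mp h)
      have h2 : ¬ (0 < ⟪W₁ μ, q⟫ + b₁ μ) := fun h => hact ((hac q hqmem x hxmem).mp h)
      rw [relu, relu, relu, max_eq_right (not_lt.mp h1), max_eq_right (not_lt.mp h2),
        max_eq_right (not_lt.mp hact)]
      ring
  -- the ν term
  have hzp : ⟪W₁ ν, p⟫ + b₁ ν = t * ‖w‖^2 := by
    rw [hp, hz ν t, ← hw, real_inner_self_eq_norm_sq]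
    linarith [hc]
  have hzq : ⟪W₁ ν, q⟫ + b₁ ν = -(t * ‖w‖^2) := by
    rw [hq, hz ν (-t), ← hw, real_inner_self_eq_norm_sq]
    linarith [hc]
  have hzx : ⟪W₁ ν, x⟫ + b₁ ν = 0 := hc
  have htermν : w₂ ν * relu (⟪W₁ ν, p⟫ + b₁ ν) + w₂ ν * relu (⟪W₁ ν, q⟫ + b₁ ν)
      - 2 * (w₂ ν * relu (⟪W₁ ν, x⟫ + b₁ ν)) = w₂ ν * (t * ‖w‖^2) := by
    rw [hzp, hzq, hzx]
    have h1 : relu (t * ‖w‖^2) = t * ‖w‖^2 := max_eq_left (by positivity)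
    have h2 : relu (-(t * ‖w‖^2)) = 0 := max_eq_right (by nlinarith)
    have h3 : relu 0 = 0 := max_eq_right le_rfl
    rw [h1, h2, h3]; ring
  -- sum up
  have hsumtot : ∑ μ, (w₂ μ * relu (⟪W₁ μ, p⟫ + b₁ μ) + w₂ μ * relu (⟪W₁ μ, q⟫ + b₁ μ)
      - 2 * (w₂ μ * relu (⟪W₁ μ, x⟫ + b₁ μ))) = w₂ ν * (t * ‖w‖^2) := by
    rw [Finset.sum_eq_single ν]
    · exact htermν
    · intro μ _ hμ; exact hterm μ hμ
    · intro h; exact absurd (Finset.mem_univ ν) h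
  have hfin : 0 ≤ w₂ ν * (t * ‖w‖^2) := by
    rw [← hsumtot, Finset.sum_sub_distrib, Finset.sum_add_distrib]
    rw [← Finset.mul_sum]
    linarith [hmid]
  have hpos : 0 < t * ‖w‖^2 := by positivity
  by_contra hneg2
  push_neg at hneg2
  nlinarith [hfin, hpos, hneg2]
end

section
/- Consider a one-hidden-layer ReLU network with first layer W₁ ∈ ℝ^{n×d}, b₁ ∈ ℝ^n (possibly with weighted input skip connections, which do not affect activations). The following are equivalent: (1) for every ν ∈ {1,…,n} the row W₁[ν,:] is nonzero, and for every pair of distinct neurons ν₁ ≠ ν₂ the augmented rows (W₁[ν₁,:] | b₁[ν₁]) ∈ ℝ^{d+1} and (W₁[ν₂,:] | b₁[ν₂]) ∈ ℝ^{d+1} are not colinear; (2) every hidden neuron ν ∈ {1,…,n} is isolated, i.e. 𝔛_ν ≠ ∅. -/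
open Set Metric
open scoped RealInnerProductSpace

section Helpers

variable {d : ℕ}

local notation "E" => EuclideanSpace ℝ (Fin d)

private lemma aff_line (W : E) (b : ℝ) (x y : E) (t : ℝ) :
    ⟪W, x + t • (y - x)⟫ + b
      = (⟪W, x⟫ + b) + t * ((⟪W, y⟫ + b) - (⟪W, x⟫ + b)) := by
  rw [inner_add_right, real_inner_smul_right, inner_sub_right]; ring

private lemma root_pt (W : E) (b : ℝ) (hW : W ≠ 0) :
    ⟪W, ((-b) / ‖W‖ ^ 2) • W⟫ + b = 0 := by
  have h : ‖W‖ ≠ 0 := norm_ne_zero_iff.mpr hW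
  rw [real_inner_smul_right, real_inner_self_eq_norm_sq]
  field_simp
  ring

/-- Near a zero of a nondegenerate affine function, inside any ball, the function takes
both positive and negative values. -/
private lemma exists_signs (W : E) (b : ℝ) (hW : W ≠ 0) {x p : E} {ε : ℝ}
    (hp : p ∈ ball x ε) (hzp : ⟪W, p⟫ + b = 0) :
    (∃ q ∈ ball x ε, 0 < ⟪W, q⟫ + b) ∧ (∃ q ∈ ball x ε, ⟪W, q⟫ + b < 0) := by
  have hWn : 0 < ‖W‖ := norm_pos_iff.mpr hW
  rw [mem_ball] at hp
  set δ : ℝ := (ε - dist p x) / 2 with hδdef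
  have hδ : 0 < δ := by simp only [hδdef]; linarith
  set c : ℝ := δ / ‖W‖ with hc
  have hcpos : 0 < c := div_pos hδ hWn
  have key : ∀ s : ℝ, |s| = c →
      p + s • W ∈ ball x ε ∧ ⟪W, p + s • W⟫ + b = s * ‖W‖ ^ 2 := by
    intro s hs
    constructor
    · rw [mem_ball]
      have h1 : dist (p + s • W) p = |s| * ‖W‖ := by
        rw [dist_eq_norm, add_sub_cancel_left, norm_smul, Real.norm_eq_abs]
      have h3 : c * ‖W‖ = δ := by rw [hc]; field_simp [hWn.ne']
      calc dist (p + s • W) x ≤ dist (p + s • W) p + dist p x := dist_triangle _ _ _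
        _ < ε := by rw [h1, hs, h3]; linarith
    · rw [inner_add_right, real_inner_smul_right, real_inner_self_eq_norm_sq]
      linarith
  obtain ⟨hq1, hq2⟩ := key c (abs_of_pos hcpos)
  obtain ⟨hr1, hr2⟩ := key (-c) (by rw [abs_neg]; exact abs_of_pos hcpos)
  have hW2 : 0 < ‖W‖ ^ 2 := by positivity
  refine ⟨⟨_, hq1, ?_⟩, ⟨_, hr1, ?_⟩⟩
  · rw [hq2]; exact mul_pos hcpos hW2
  · rw [hr2]; nlinarith

/-- If an affine function is nonzero at the center, its activation is constant on a small
enough ball. -/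
private lemma actconst_of_ne (W : E) (b : ℝ) {x : E} (hx : ⟪W, x⟫ + b ≠ 0) {ε : ℝ}
    (hε : ε ≤ |⟪W, x⟫ + b| / (‖W‖ + 1)) :
    ActConstOn (fun y : E => ⟪W, y⟫ + b) (ball x ε) := by
  have hW1 : 0 < ‖W‖ + 1 := by positivity
  have key : ∀ y ∈ ball x ε, (0 < ⟪W, y⟫ + b ↔ 0 < ⟪W, x⟫ + b) := by
    intro y hy
    rw [mem_ball] at hy
    have h1 : |(⟪W, y⟫ + b) - (⟪W, x⟫ + b)| < |⟪W, x⟫ + b| := by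
      have e1 : (⟪W, y⟫ + b) - (⟪W, x⟫ + b) = ⟪W, y - x⟫ := by
        rw [inner_sub_right]; ring
      have e3 : ‖y - x‖ < ε := by rwa [← dist_eq_norm]
      have e6 : ‖W‖ * (|⟪W, x⟫ + b| / (‖W‖ + 1)) < |⟪W, x⟫ + b| := by
        rw [← mul_div_assoc, div_lt_iff₀ hW1]
        have hA : 0 < |⟪W, x⟫ + b| := abs_pos.mpr hx
        nlinarith [norm_nonneg W]
      calc |(⟪W, y⟫ + b) - (⟪W, x⟫ + b)| = |⟪W, y - x⟫| := by rw [e1]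
        _ ≤ ‖W‖ * ‖y - x‖ := abs_real_inner_le_norm _ _
        _ ≤ ‖W‖ * ε := mul_le_mul_of_nonneg_left e3.le (norm_nonneg W)
        _ ≤ ‖W‖ * (|⟪W, x⟫ + b| / (‖W‖ + 1)) :=
              mul_le_mul_of_nonneg_left hε (norm_nonneg W)
        _ < _ := e6
    rcases hx.lt_or_gt with h0 | h0
    · rw [abs_of_neg h0] at h1
      have h2 := abs_lt.mp h1
      constructor <;> intro h <;> [linarith [h2.2]; linarith]
    · rw [abs_of_pos h0] at h1
      have h2 := abs_lt.mp h1
      constructor <;> intro h <;> [linarith; linarith [h2.1]]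
  intro y hy y' hy'
  rw [key y hy, key y' hy']

/-- If the augmented rows are not colinear (in the direction `(W', b') = c • (W, b)`),
then there is a point of the hyperplane of `(W, b)` where `(W', b')` does not vanish. -/
private lemma off_hyperplane (W W' : E) (b b' : ℝ) (hW : W ≠ 0)
    (h : ¬ ∃ c : ℝ, W' = c • W ∧ b' = c * b) :
    ∃ y : E, ⟪W, y⟫ + b = 0 ∧ ⟪W', y⟫ + b' ≠ 0 := by
  by_contra hc
  push_neg at hc
  have hW2 : (‖W‖ : ℝ) ^ 2 ≠ 0 := pow_ne_zero _ (norm_ne_zero_iff.mpr hW)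
  set c : ℝ := ⟪W, W'⟫ / ‖W‖ ^ 2 with hcdef
  set x₀ : E := ((-b) / ‖W‖ ^ 2) • W with hx₀def
  have hx0 : ⟪W, x₀⟫ + b = 0 := root_pt W b hW
  set v : E := W' - c • W with hvdef
  have hv : ⟪W, v⟫ = 0 := by
    rw [hvdef, inner_sub_right, real_inner_smul_right, real_inner_self_eq_norm_sq, hcdef]
    field_simp
    ring
  have h1 : ⟪W, x₀ + v⟫ + b = 0 := by
    rw [inner_add_right, hv]; linarith
  have h2 := hc _ h1
  have h3 := hc _ hx0
  rw [inner_add_right] at h2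
  have h4 : ⟪W', v⟫ = 0 := by linarith
  have hW'v : W' = v + c • W := by rw [hvdef]; abel
  have h5 : ⟪v, v⟫ = 0 := by
    have h6 := h4
    rw [hW'v, inner_add_left, real_inner_smul_left, hv, mul_zero, add_zero] at h6
    exact h6
  have hv0 : v = 0 := inner_self_eq_zero.mp h5
  have hW' : W' = c • W := by rw [hW'v, hv0, zero_add]
  have hWx₀ : ⟪W, x₀⟫ = -b := by linarith
  have hb' : b' = c * b := by
    have : ⟪W', x₀⟫ + b' = 0 := h3
    rw [hW', real_inner_smul_left, hWx₀] at this
    linarith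
  exact h ⟨c, hW', hb'⟩

end Helpers

private lemma exists_pos_le {ι : Type*} [DecidableEq ι] (s : Finset ι) (f : ι → ℝ) :
    (∀ i ∈ s, 0 < f i) → ∃ ε > (0 : ℝ), ∀ i ∈ s, ε ≤ f i := by
  induction s using Finset.induction_on with
  | empty => exact fun _ => ⟨1, one_pos, by simp⟩
  | @insert a s ha ih =>
    intro hf
    obtain ⟨ε, hε, h⟩ := ih fun i hi => hf i (Finset.mem_insert_of_mem hi)
    refine ⟨min ε (f a), lt_min hε (hf a (Finset.mem_insert_self _ _)), ?_⟩
    intro i hi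
    rcases Finset.mem_insert.mp hi with rfl | hi
    · exact min_le_right _ _
    · exact (min_le_left _ _).trans (h i hi)

/-- Existence of a point on the hyperplane of neuron `ν` avoiding the hyperplanes of all
neurons in a finite set `s`, provided none of them has an augmented row that is a multiple
of the augmented row of `ν`. -/
private lemma exists_generic_point {d n : ℕ} (W : Fin n → EuclideanSpace ℝ (Fin d))
    (b : Fin n → ℝ) (ν : Fin n) (hWν : W ν ≠ 0) (s : Finset (Fin n)) :
    (∀ μ ∈ s, ¬ ∃ c : ℝ, W μ = c • W ν ∧ b μ = c * b ν) →
    ∃ x : EuclideanSpace ℝ (Fin d),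
      (⟪W ν, x⟫ + b ν = 0) ∧ ∀ μ ∈ s, ⟪W μ, x⟫ + b μ ≠ 0 := by
  induction s using Finset.induction_on with
  | empty => exact fun _ => ⟨_, root_pt (W ν) (b ν) hWν, by simp⟩
  | @insert a s ha ih =>
    intro hs
    obtain ⟨x, hx0, hxs⟩ := ih fun μ hμ => hs μ (Finset.mem_insert_of_mem hμ)
    obtain ⟨y, hy0, hya⟩ :=
      off_hyperplane (W ν) (W a) (b ν) (b a) hWν (hs a (Finset.mem_insert_self _ _))
    by_cases hax : ⟪W a, x⟫ + b a = 0
    · -- perturb x towards y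
      set U : Set ℝ := ⋂ μ ∈ s,
        (fun t : ℝ => (⟪W μ, x⟫ + b μ) + t * ((⟪W μ, y⟫ + b μ) - (⟪W μ, x⟫ + b μ))) ⁻¹'
          {0}ᶜ with hU
      have hUopen : IsOpen U := by
        apply isOpen_biInter_finset
        intro μ _
        exact isOpen_compl_singleton.preimage (by fun_prop)
      have h0U : (0 : ℝ) ∈ U := by
        simp only [hU, Set.mem_iInter, Set.mem_preimage, Set.mem_compl_iff,
          Set.mem_singleton_iff]
        intro μ hμ
        simpa using hxs μ hμ
      obtain ⟨δ, hδ, hball⟩ := Metric.isOpen_iff.mp hUopen 0 h0U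
      have htmem : δ / 2 ∈ ball (0 : ℝ) δ := by
        rw [mem_ball, Real.dist_eq, sub_zero, abs_of_pos (by linarith)]
        linarith
      have htU := hball htmem
      simp only [hU, Set.mem_iInter, Set.mem_preimage, Set.mem_compl_iff,
        Set.mem_singleton_iff] at htU
      refine ⟨x + (δ / 2) • (y - x), ?_, ?_⟩
      · rw [aff_line, hx0, hy0]; ring
      · intro μ hμ
        rcases Finset.mem_insert.mp hμ with rfl | hμ
        · rw [aff_line, hax]
          have : (0 : ℝ) + (δ / 2) * ((⟪W μ, y⟫ + b μ) - 0) = (δ / 2) * (⟪W μ, y⟫ + b μ) := by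
            ring
          rw [this]
          exact mul_ne_zero (by positivity) hya
        · rw [aff_line]
          exact htU μ hμ
    · refine ⟨x, hx0, fun μ hμ => ?_⟩
      rcases Finset.mem_insert.mp hμ with rfl | hμ
      · exact hax
      · exact hxs μ hμ

/-- For a one-hidden-layer ReLU network with first layer `(W₁, b₁)`, the following are
equivalent: (1) every row `W₁ ν` is nonzero and no two distinct augmented rows
`(W₁ ν | b₁ ν) ∈ ℝ^{d+1}` are colinear; (2) every hidden neuron is isolated,
i.e. `𝔛 ν ≠ ∅` for every `ν`. -/
theorem assumption_iff_all_isolated {d n : ℕ}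
    (W₁ : Fin n → EuclideanSpace ℝ (Fin d)) (b₁ : Fin n → ℝ) :
    ((∀ ν, W₁ ν ≠ 0) ∧
      ∀ ν₁ ν₂, ν₁ ≠ ν₂ →
        ¬ ((∃ c : ℝ, W₁ ν₂ = c • W₁ ν₁ ∧ b₁ ν₂ = c * b₁ ν₁) ∨
           (∃ c : ℝ, W₁ ν₁ = c • W₁ ν₂ ∧ b₁ ν₁ = c * b₁ ν₂)))
    ↔ (∀ ν, (Xiso (fun μ (x : EuclideanSpace ℝ (Fin d)) => ⟪W₁ μ, x⟫ + b₁ μ) ν).Nonempty) := by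
  constructor
  · rintro ⟨h1, h2⟩ ν
    have hWν := h1 ν
    set s : Finset (Fin n) := Finset.univ.erase ν with hsdef
    obtain ⟨x, hx0, hxs⟩ := exists_generic_point W₁ b₁ ν hWν s (by
      intro μ hμ hcol
      have hμν : μ ≠ ν := (Finset.mem_erase.mp hμ).1
      exact h2 ν μ hμν.symm (Or.inl hcol))
    obtain ⟨ε₀, hε₀, hle⟩ := exists_pos_le s
      (fun μ => |⟪W₁ μ, x⟫ + b₁ μ| / (‖W₁ μ‖ + 1))
      (fun μ hμ => by
        have h := hxs μ hμ
        have : 0 < |⟪W₁ μ, x⟫ + b₁ μ| := abs_pos.mpr h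
        positivity)
    refine ⟨x, ε₀, hε₀, fun ε hε hεle => ⟨?_, ?_⟩⟩
    · intro μ hμ
      have hμs : μ ∈ s := Finset.mem_erase.mpr ⟨hμ, Finset.mem_univ μ⟩
      exact actconst_of_ne (W₁ μ) (b₁ μ) (hxs μ hμs) (hεle.trans (hle μ hμs))
    · intro hconst
      obtain ⟨⟨q, hq, hq0⟩, _⟩ := exists_signs (W₁ ν) (b₁ ν) hWν (mem_ball_self hε) hx0
      have h := (hconst q hq x (mem_ball_self hε)).mp hq0
      simp only [hx0] at h
      exact lt_irrefl 0 h
  · intro hiso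
    have hWne : ∀ ν, W₁ ν ≠ 0 := by
      intro ν hW0
      obtain ⟨x, ε₀, hε₀, hx⟩ := hiso ν
      refine (hx ε₀ hε₀ le_rfl).2 ?_
      intro y _ y' _
      simp [hW0, inner_zero_left]
    have key : ∀ α β : Fin n, α ≠ β → ∀ c : ℝ, W₁ β = c • W₁ α → b₁ β = c * b₁ α → False := by
      intro α β hne c hWc hbc
      have hcne : c ≠ 0 := by
        rintro rfl
        rw [zero_smul] at hWc
        exact hWne β hWc
      have hscale : ∀ y : EuclideanSpace ℝ (Fin d),
          ⟪W₁ β, y⟫ + b₁ β = c * (⟪W₁ α, y⟫ + b₁ α) := by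
        intro y
        rw [hWc, hbc, real_inner_smul_left]; ring
      obtain ⟨x, ε₀, hε₀, hx⟩ := hiso α
      obtain ⟨hconst, hnc⟩ := hx ε₀ hε₀ le_rfl
      have hβ := hconst β hne.symm
      rcases hcne.lt_or_gt with hc | hc
      · -- c < 0
        unfold ActConstOn at hnc
        push_neg at hnc
        obtain ⟨u, hu, u', hu', hne2⟩ := hnc
        have main : ∀ v ∈ ball x ε₀, ∀ v' ∈ ball x ε₀,
            0 < ⟪W₁ α, v⟫ + b₁ α → ¬ (0 < ⟪W₁ α, v'⟫ + b₁ α) → False := by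
          intro v hv v' hv' hpos hnonpos
          rcases lt_or_eq_of_le (not_lt.mp hnonpos) with hlt | heq
          · have h1 := hβ v hv v' hv'
            simp only [hscale] at h1
            have h3 : 0 < c * (⟪W₁ α, v'⟫ + b₁ α) := mul_pos_of_neg_of_neg hc hlt
            have h4 := h1.mpr h3
            nlinarith
          · obtain ⟨_, ⟨q, hq, hqneg⟩⟩ :=
              exists_signs (W₁ α) (b₁ α) (hWne α) hv' heq
            have h1 := hβ v hv q hq
            simp only [hscale] at h1
            have h3 : 0 < c * (⟪W₁ α, q⟫ + b₁ α) := mul_pos_of_neg_of_neg hc hqneg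
            have h4 := h1.mpr h3
            nlinarith
        rcases hne2 with ⟨hpos, hnp⟩ | ⟨hnp, hpos⟩
        · exact main u hu u' hu' hpos (not_lt.mpr hnp)
        · exact main u' hu' u hu hpos (not_lt.mpr hnp)
      · -- c > 0
        apply hnc
        intro y hy y' hy'
        have h1 := hβ y hy y' hy'
        simp only [hscale] at h1
        have e : ∀ t : ℝ, (0 < c * t ↔ 0 < t) := by
          intro t
          constructor <;> intro h <;> nlinarith
        rw [e, e] at h1
        exact h1
    refine ⟨hWne, fun ν₁ ν₂ hne h => ?_⟩
    rcases h with ⟨c, hW, hb⟩ | ⟨c, hW, hb⟩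
    · exact key ν₁ ν₂ hne c hW hb
    · exact key ν₂ ν₁ hne.symm c hW hb
end

section
/- Let f_θ : ℝ^d → ℝ be the one-hidden-layer ReLU network f_θ(x) = w₂ᵀ ReLU(W₁ x + b₁) + b₂, with W₁ ∈ ℝ^{n×d}, b₁, w₂ ∈ ℝ^n, b₂ ∈ ℝ. Assume: every row W₁[ν,:] is nonzero, and for every pair of distinct neurons ν₁ ≠ ν₂ the augmented rows (W₁[ν₁,:] | b₁[ν₁]) and (W₁[ν₂,:] | b₁[ν₂]) in ℝ^{d+1} are not colinear. Then f_θ is convex on ℝ^d if and only if w₂[ν] ≥ 0 for every ν ∈ {1,…,n}. -/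
open Set Metric
open scoped RealInnerProductSpace

lemma relu_of_nonneg {a : ℝ} (h : 0 ≤ a) : relu a = a := max_eq_left h
lemma relu_of_nonpos {a : ℝ} (h : a ≤ 0) : relu a = 0 := max_eq_right h

lemma relu_combo {a b s u : ℝ} (ha : 0 ≤ a) (hb : 0 ≤ b) :
    relu (a * s + b * u) ≤ a * relu s + b * relu u := by
  unfold relu
  apply max_le
  · exact add_le_add (mul_le_mul_of_nonneg_left (le_max_left _ _) ha)
      (mul_le_mul_of_nonneg_left (le_max_left _ _) hb)
  · exact add_nonneg (mul_nonneg ha (le_max_right _ _)) (mul_nonneg hb (le_max_right _ _))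

lemma exists_avoid {E : Type*} [NormedAddCommGroup E] [InnerProductSpace ℝ E]
    [CompleteSpace E] {ι : Type*} [Countable ι] (q : ι → E) (dd : ι → ℝ)
    (h : ∀ i, q i ≠ 0 ∨ dd i ≠ 0) :
    ∃ v : E, ∀ i, ⟪q i, v⟫ + dd i ≠ 0 := by
  have hdense : Dense (⋂ i, {v : E | ⟪q i, v⟫ + dd i ≠ 0}) := by
    apply dense_iInter_of_isOpen
    · intro i
      have hc : Continuous fun v : E => ⟪q i, v⟫ + dd i :=
        ((continuous_const.inner continuous_id).add continuous_const)
      exact isOpen_compl_singleton.preimage hc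
    · intro i
      by_cases hq : q i = 0
      · have hd := (h i).resolve_left (by simp [hq])
        have : {v : E | ⟪q i, v⟫ + dd i ≠ 0} = univ := by
          ext v; simp [hq, hd]
        rw [this]; exact dense_univ
      · rw [Metric.dense_iff]
        intro x r hr
        by_cases hx : ⟪q i, x⟫ + dd i ≠ 0
        · exact ⟨x, mem_ball_self hr, hx⟩
        · push_neg at hx
          have hqn : (0:ℝ) < ‖q i‖ := norm_pos_iff.2 hq
          refine ⟨x + (r / (2 * ‖q i‖)) • q i, ?_, ?_⟩
          · rw [mem_ball, dist_eq_norm]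
            simp only [add_sub_cancel_left, norm_smul]
            rw [Real.norm_eq_abs, abs_of_pos (by positivity)]
            rw [div_mul_eq_mul_div, mul_comm]
            rw [div_lt_iff₀ (by positivity)]
            nlinarith
          · simp only [mem_setOf_eq, inner_add_right, real_inner_smul_right]
            rw [real_inner_self_eq_norm_sq]
            intro hcon
            have h1 : r / (2 * ‖q i‖) * ‖q i‖ ^ 2 = 0 := by linarith [hx, hcon]
            have h2 : r / (2 * ‖q i‖) * ‖q i‖ ^ 2 > 0 := by positivity
            linarith
  obtain ⟨v, hv⟩ := hdense.nonempty
  exact ⟨v, fun i => mem_iInter.1 hv i⟩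

lemma convexOn_finset_sum {E : Type*} [NormedAddCommGroup E] [InnerProductSpace ℝ E]
    {s : Set E} (hs : Convex ℝ s) {ι : Type*} (t : Finset ι) (f : ι → E → ℝ)
    (h : ∀ i ∈ t, ConvexOn ℝ s (f i)) :
    ConvexOn ℝ s (fun x => ∑ i ∈ t, f i x) := by
  classical
  induction t using Finset.induction_on with
  | empty => simpa using convexOn_const 0 hs
  | insert _ _ hnotmem ih =>
    rename_i a tt
    simp only [Finset.sum_insert hnotmem]
    exact (h a (Finset.mem_insert_self a tt)).add
      (ih fun i hi => h i (Finset.mem_insert_of_mem hi))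

set_option maxHeartbeats 1000000 in
/-- Under the non-degeneracy assumption (every row `W₁ ν` nonzero, no two distinct
augmented rows colinear), the one-hidden-layer ReLU network
`f(x) = w₂ᵀ ReLU(W₁ x + b₁) + b₂` is convex on `ℝ^d` if and only if its last layer is
nonnegative: `w₂ ν ≥ 0` for every `ν`. -/
theorem oneHiddenLayer_convex_iff_lastLayer_nonneg {d n : ℕ}
    (W₁ : Fin n → EuclideanSpace ℝ (Fin d)) (b₁ w₂ : Fin n → ℝ) (b₂ : ℝ)
    (hW : ∀ ν, W₁ ν ≠ 0)
    (hcol : ∀ ν₁ ν₂, ν₁ ≠ ν₂ →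
      ¬ ((∃ c : ℝ, W₁ ν₂ = c • W₁ ν₁ ∧ b₁ ν₂ = c * b₁ ν₁) ∨
         (∃ c : ℝ, W₁ ν₁ = c • W₁ ν₂ ∧ b₁ ν₁ = c * b₁ ν₂))) :
    ConvexOn ℝ Set.univ (fun x : EuclideanSpace ℝ (Fin d) =>
        ∑ ν, w₂ ν * relu (⟪W₁ ν, x⟫ + b₁ ν) + b₂)
      ↔ ∀ ν, 0 ≤ w₂ ν := by
  classical
  constructor
  · -- convexity implies nonneg last layer
    intro hconv ν
    have hS : (0:ℝ) < ⟪W₁ ν, W₁ ν⟫ := by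
      have h0 : (0:ℝ) < ‖W₁ ν‖ := norm_pos_iff.2 (hW ν)
      rw [real_inner_self_eq_norm_sq]
      positivity
    have hSne : ⟪W₁ ν, W₁ ν⟫ ≠ 0 := ne_of_gt hS
    set p : EuclideanSpace ℝ (Fin d) := (-(b₁ ν) / ⟪W₁ ν, W₁ ν⟫) • W₁ ν with hpdef
    set q : Fin n → EuclideanSpace ℝ (Fin d) :=
      fun μ => W₁ μ - (⟪W₁ μ, W₁ ν⟫ / ⟪W₁ ν, W₁ ν⟫) • W₁ ν with hqdef
    set dd : Fin n → ℝ := fun μ => ⟪W₁ μ, p⟫ + b₁ μ with hdddef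
    have hkey : ∀ μ : Fin n, μ ≠ ν → (q μ ≠ 0 ∨ dd μ ≠ 0) := by
      intro μ hμ
      by_contra hcon
      push_neg at hcon
      obtain ⟨hq0, hd0⟩ := hcon
      apply hcol ν μ (Ne.symm hμ)
      left
      have hW1 : W₁ μ = (⟪W₁ μ, W₁ ν⟫ / ⟪W₁ ν, W₁ ν⟫) • W₁ ν := by
        have := sub_eq_zero.1 hq0
        exact this
      refine ⟨⟪W₁ μ, W₁ ν⟫ / ⟪W₁ ν, W₁ ν⟫, hW1, ?_⟩
      have h1 : ⟪W₁ μ, p⟫ = (⟪W₁ μ, W₁ ν⟫ / ⟪W₁ ν, W₁ ν⟫) * (-(b₁ ν)) := by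
        rw [hpdef, real_inner_smul_right, hW1, real_inner_smul_left]
        field_simp
      have h2 : ⟪W₁ μ, p⟫ + b₁ μ = 0 := hd0
      rw [h1] at h2
      linarith
    obtain ⟨v, hv⟩ := exists_avoid (fun μ : {μ : Fin n // μ ≠ ν} => q μ.1)
      (fun μ => dd μ.1) (fun μ => hkey μ.1 μ.2)
    set x₀ : EuclideanSpace ℝ (Fin d) :=
      p + (v - (⟪W₁ ν, v⟫ / ⟪W₁ ν, W₁ ν⟫) • W₁ ν) with hx₀
    have hz : ∀ μ, ⟪W₁ μ, x₀⟫ + b₁ μ = ⟪q μ, v⟫ + dd μ := by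
      intro μ
      simp only [hx₀, hqdef, hdddef, inner_add_right, inner_sub_right, inner_sub_left,
        real_inner_smul_right, real_inner_smul_left]
      ring
    have hz0 : ⟪W₁ ν, x₀⟫ + b₁ ν = 0 := by
      have expand : ⟪W₁ ν, x₀⟫ = (-(b₁ ν) / ⟪W₁ ν, W₁ ν⟫) * ⟪W₁ ν, W₁ ν⟫
          + (⟪W₁ ν, v⟫ - (⟪W₁ ν, v⟫ / ⟪W₁ ν, W₁ ν⟫) * ⟪W₁ ν, W₁ ν⟫) := by
        simp only [hx₀, hpdef, inner_add_right, inner_sub_right, real_inner_smul_right]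
      rw [expand, div_mul_cancel₀ _ hSne, div_mul_cancel₀ _ hSne]
      ring
    have hzμ : ∀ μ, μ ≠ ν → ⟪W₁ μ, x₀⟫ + b₁ μ ≠ 0 := by
      intro μ hμ
      rw [hz μ]
      exact hv ⟨μ, hμ⟩
    -- choose a small step size t
    set c : Fin n → ℝ := fun μ => if μ = ν then 1
      else |⟪W₁ μ, x₀⟫ + b₁ μ| / (|⟪W₁ μ, W₁ ν⟫| + 1) with hcdef
    have hcpos : ∀ μ, 0 < c μ := by
      intro μ
      by_cases hμ : μ = ν
      · simp [hcdef, hμ]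
      · simp only [hcdef, hμ, if_false]
        have h1 : 0 < |⟪W₁ μ, x₀⟫ + b₁ μ| := abs_pos.2 (hzμ μ hμ)
        positivity
    set t := Finset.univ.inf' (Finset.univ_nonempty_iff.mpr ⟨ν⟩) c with htdef
    have ht : 0 < t := by
      rw [htdef, Finset.lt_inf'_iff]
      exact fun μ _ => hcpos μ
    have hbound : ∀ μ, μ ≠ ν → t * |⟪W₁ μ, W₁ ν⟫| < |⟪W₁ μ, x₀⟫ + b₁ μ| := by
      intro μ hμ
      have h1 : t ≤ |⟪W₁ μ, x₀⟫ + b₁ μ| / (|⟪W₁ μ, W₁ ν⟫| + 1) := by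
        have := Finset.inf'_le c (Finset.mem_univ μ)
        rw [← htdef] at this
        simpa [hcdef, hμ] using this
      have hzpos : 0 < |⟪W₁ μ, x₀⟫ + b₁ μ| := abs_pos.2 (hzμ μ hμ)
      have hApos : 0 ≤ |⟪W₁ μ, W₁ ν⟫| := abs_nonneg _
      calc t * |⟪W₁ μ, W₁ ν⟫|
          ≤ (|⟪W₁ μ, x₀⟫ + b₁ μ| / (|⟪W₁ μ, W₁ ν⟫| + 1)) * |⟪W₁ μ, W₁ ν⟫| :=
            mul_le_mul_of_nonneg_right h1 hApos
        _ < |⟪W₁ μ, x₀⟫ + b₁ μ| := by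
            rw [div_mul_eq_mul_div, div_lt_iff₀ (by positivity)]
            nlinarith
    -- midpoint convexity
    set xp : EuclideanSpace ℝ (Fin d) := x₀ + t • W₁ ν with hxp
    set xm : EuclideanSpace ℝ (Fin d) := x₀ - t • W₁ ν with hxm
    have hmidpt : (1/2 : ℝ) • xp + (1/2 : ℝ) • xm = x₀ := by
      rw [hxp, hxm]; module
    have hmid := hconv.2 (mem_univ xp) (mem_univ xm)
      (by norm_num : (0:ℝ) ≤ 1/2) (by norm_num : (0:ℝ) ≤ 1/2) (by norm_num : (1:ℝ)/2 + 1/2 = 1)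
    rw [hmidpt] at hmid
    simp only [smul_eq_mul] at hmid
    have hinnerp : ∀ μ, ⟪W₁ μ, xp⟫ + b₁ μ = (⟪W₁ μ, x₀⟫ + b₁ μ) + t * ⟪W₁ μ, W₁ ν⟫ := by
      intro μ
      rw [hxp]
      simp only [inner_add_right, real_inner_smul_right]
      ring
    have hinnerm : ∀ μ, ⟪W₁ μ, xm⟫ + b₁ μ = (⟪W₁ μ, x₀⟫ + b₁ μ) - t * ⟪W₁ μ, W₁ ν⟫ := by
      intro μ
      rw [hxm]
      simp only [inner_sub_right, real_inner_smul_right]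
      ring
    have hfxp : ∑ μ, w₂ μ * relu (⟪W₁ μ, xp⟫ + b₁ μ)
        = ∑ μ, w₂ μ * relu ((⟪W₁ μ, x₀⟫ + b₁ μ) + t * ⟪W₁ μ, W₁ ν⟫) :=
      Finset.sum_congr rfl fun μ _ => by rw [hinnerp μ]
    have hfxm : ∑ μ, w₂ μ * relu (⟪W₁ μ, xm⟫ + b₁ μ)
        = ∑ μ, w₂ μ * relu ((⟪W₁ μ, x₀⟫ + b₁ μ) - t * ⟪W₁ μ, W₁ ν⟫) :=
      Finset.sum_congr rfl fun μ _ => by rw [hinnerm μ]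
    rw [hfxp, hfxm] at hmid
    -- per-term computation
    have hterm : ∀ μ : Fin n,
        1/2 * (w₂ μ * relu ((⟪W₁ μ, x₀⟫ + b₁ μ) + t * ⟪W₁ μ, W₁ ν⟫))
        + 1/2 * (w₂ μ * relu ((⟪W₁ μ, x₀⟫ + b₁ μ) - t * ⟪W₁ μ, W₁ ν⟫))
        - w₂ μ * relu (⟪W₁ μ, x₀⟫ + b₁ μ)
        = if μ = ν then w₂ ν * (t * ⟪W₁ ν, W₁ ν⟫ / 2) else 0 := by
      intro μ
      by_cases hμ : μ = ν
      · subst hμ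
        rw [hz0, zero_add, zero_sub]
        rw [relu_of_nonneg (by positivity), relu_of_nonpos (by nlinarith),
          relu_of_nonpos le_rfl]
        simp only [if_true, eq_self_iff_true, ite_true]
        ring
      · simp only [if_neg hμ]
        have hb := hbound μ hμ
        have habs : |t * ⟪W₁ μ, W₁ ν⟫| = t * |⟪W₁ μ, W₁ ν⟫| := by
          rw [abs_mul, abs_of_pos ht]
        have h1 : t * ⟪W₁ μ, W₁ ν⟫ ≤ t * |⟪W₁ μ, W₁ ν⟫| := by
          rw [← habs]; exact le_abs_self _
        have h2 : -(t * |⟪W₁ μ, W₁ ν⟫|) ≤ t * ⟪W₁ μ, W₁ ν⟫ := by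
          rw [← habs]; exact neg_abs_le _
        rcases lt_or_gt_of_ne (hzμ μ hμ) with hneg | hpos
        · rw [relu_of_nonpos (by rw [abs_of_neg hneg] at hb; linarith),
            relu_of_nonpos (by rw [abs_of_neg hneg] at hb; linarith),
            relu_of_nonpos hneg.le]
          ring
        · rw [relu_of_nonneg (by rw [abs_of_pos hpos] at hb; linarith),
            relu_of_nonneg (by rw [abs_of_pos hpos] at hb; linarith),
            relu_of_nonneg hpos.le]
          ring
    have hsum : ∑ μ, (1/2 * (w₂ μ * relu ((⟪W₁ μ, x₀⟫ + b₁ μ) + t * ⟪W₁ μ, W₁ ν⟫))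
        + 1/2 * (w₂ μ * relu ((⟪W₁ μ, x₀⟫ + b₁ μ) - t * ⟪W₁ μ, W₁ ν⟫))
        - w₂ μ * relu (⟪W₁ μ, x₀⟫ + b₁ μ))
        = w₂ ν * (t * ⟪W₁ ν, W₁ ν⟫ / 2) := by
      rw [Finset.sum_congr rfl fun μ _ => hterm μ]
      simp
    have expand : ∑ μ, (1/2 * (w₂ μ * relu ((⟪W₁ μ, x₀⟫ + b₁ μ) + t * ⟪W₁ μ, W₁ ν⟫))
        + 1/2 * (w₂ μ * relu ((⟪W₁ μ, x₀⟫ + b₁ μ) - t * ⟪W₁ μ, W₁ ν⟫))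
        - w₂ μ * relu (⟪W₁ μ, x₀⟫ + b₁ μ))
        = (1/2 * (∑ μ, w₂ μ * relu ((⟪W₁ μ, x₀⟫ + b₁ μ) + t * ⟪W₁ μ, W₁ ν⟫) + b₂)
          + 1/2 * (∑ μ, w₂ μ * relu ((⟪W₁ μ, x₀⟫ + b₁ μ) - t * ⟪W₁ μ, W₁ ν⟫) + b₂))
          - (∑ μ, w₂ μ * relu (⟪W₁ μ, x₀⟫ + b₁ μ) + b₂) := by
      rw [Finset.sum_sub_distrib, Finset.sum_add_distrib, ← Finset.mul_sum, ← Finset.mul_sum]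
      ring
    have hkey2 : 0 ≤ w₂ ν * (t * ⟪W₁ ν, W₁ ν⟫ / 2) := by
      rw [← hsum, expand]
      linarith
    have hpos : 0 < t * ⟪W₁ ν, W₁ ν⟫ / 2 := by positivity
    by_contra hcontra
    push_neg at hcontra
    nlinarith
  · -- nonneg last layer implies convexity
    intro hw
    have hterm : ∀ μ : Fin n, ConvexOn ℝ (univ : Set (EuclideanSpace ℝ (Fin d)))
        (fun x => w₂ μ * relu (⟪W₁ μ, x⟫ + b₁ μ)) := by
      intro μ
      refine ⟨convex_univ, ?_⟩
      intro x _ y _ a b ha hb hab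
      simp only [smul_eq_mul]
      have hin : ⟪W₁ μ, a • x + b • y⟫ + b₁ μ
          = a * (⟪W₁ μ, x⟫ + b₁ μ) + b * (⟪W₁ μ, y⟫ + b₁ μ) := by
        simp only [inner_add_right, real_inner_smul_right]
        linear_combination (b₁ μ) * hab.symm
      rw [hin]
      calc w₂ μ * relu (a * (⟪W₁ μ, x⟫ + b₁ μ) + b * (⟪W₁ μ, y⟫ + b₁ μ))
          ≤ w₂ μ * (a * relu (⟪W₁ μ, x⟫ + b₁ μ) + b * relu (⟪W₁ μ, y⟫ + b₁ μ)) :=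
            mul_le_mul_of_nonneg_left (relu_combo ha hb) (hw μ)
        _ = a * (w₂ μ * relu (⟪W₁ μ, x⟫ + b₁ μ)) + b * (w₂ μ * relu (⟪W₁ μ, y⟫ + b₁ μ)) := by
            ring
    exact (convexOn_finset_sum convex_univ Finset.univ
      (fun μ x => w₂ μ * relu (⟪W₁ μ, x⟫ + b₁ μ)) fun μ _ => hterm μ).add_const b₂
end

section
/- Let f_θ : ℝ^d → ℝ be the one-hidden-layer ReLU network with weighted input skip connection f_θ(x) = w₂ᵀ ReLU(W₁ x + b₁) + b₂ + v₂ᵀ x, with W₁ ∈ ℝ^{n×d}, b₁, w₂ ∈ ℝ^n, v₂ ∈ ℝ^d, b₂ ∈ ℝ. Assume: every row W₁[ν,:] is nonzero, and for every pair of distinct neurons ν₁ ≠ ν₂ the augmented rows (W₁[ν₁,:] | b₁[ν₁]) and (W₁[ν₂,:] | b₁[ν₂]) in ℝ^{d+1} are not colinear. Then f_θ is convex on ℝ^d if and only if w₂[ν] ≥ 0 for every ν ∈ {1,…,n}, i.e. if and only if the network is an ICNN. -/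
open Set Metric
open scoped RealInnerProductSpace

private lemma relu_comb {a b u v : ℝ} (ha : 0 ≤ a) (hb : 0 ≤ b) :
    relu (a*u + b*v) ≤ a * relu u + b * relu v := by
  unfold relu
  have h1 : a*u ≤ a * max u 0 := mul_le_mul_of_nonneg_left (le_max_left u 0) ha
  have h2 : b*v ≤ b * max v 0 := mul_le_mul_of_nonneg_left (le_max_left v 0) hb
  have h3 : (0:ℝ) ≤ a * max u 0 + b * max v 0 := by positivity
  exact max_le (by linarith) h3

/-- Under the non-degeneracy assumption (every row `W₁ ν` nonzero, no two distinct
augmented rows colinear), the one-hidden-layer ReLU network with weighted input skip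
connection `f(x) = w₂ᵀ ReLU(W₁ x + b₁) + b₂ + v₂ᵀ x` is convex on `ℝ^d` if and only if
`w₂ ν ≥ 0` for every `ν`, i.e. if and only if the network is an ICNN. -/
theorem skipOneHiddenLayer_convex_iff_ICNN {d n : ℕ}
    (W₁ : Fin n → EuclideanSpace ℝ (Fin d)) (b₁ w₂ : Fin n → ℝ)
    (v₂ : EuclideanSpace ℝ (Fin d)) (b₂ : ℝ)
    (hW : ∀ ν, W₁ ν ≠ 0)
    (hcol : ∀ ν₁ ν₂, ν₁ ≠ ν₂ →
      ¬ ((∃ c : ℝ, W₁ ν₂ = c • W₁ ν₁ ∧ b₁ ν₂ = c * b₁ ν₁) ∨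
         (∃ c : ℝ, W₁ ν₁ = c • W₁ ν₂ ∧ b₁ ν₁ = c * b₁ ν₂))) :
    ConvexOn ℝ Set.univ (fun x : EuclideanSpace ℝ (Fin d) =>
        ∑ ν, w₂ ν * relu (⟪W₁ ν, x⟫ + b₁ ν) + b₂ + ⟪v₂, x⟫)
      ↔ ∀ ν, 0 ≤ w₂ ν := by
  constructor
  · -- hard direction
    intro hconv ν
    have hnnpos : ∀ μ : Fin n, (0:ℝ) < ⟪W₁ μ, W₁ μ⟫ := fun μ =>
      lt_of_le_of_ne real_inner_self_nonneg
        (fun h => hW μ (inner_self_eq_zero.1 h.symm))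
    -- a point on the ν-hyperplane
    have hnn := hnnpos ν
    have hpex : ∃ p : EuclideanSpace ℝ (Fin d), ⟪W₁ ν, p⟫ + b₁ ν = 0 := by
      refine ⟨(-(b₁ ν)/⟪W₁ ν, W₁ ν⟫) • W₁ ν, ?_⟩
      rw [real_inner_smul_right, div_mul_cancel₀ _ hnn.ne']
      ring
    obtain ⟨p, hp⟩ := hpex
    -- non-vanishing of other neurons on the ν-hyperplane
    have hA1 : ∀ μ, μ ≠ ν →
        ∃ y, ⟪W₁ ν, y⟫ + b₁ ν = 0 ∧ ⟪W₁ μ, y⟫ + b₁ μ ≠ 0 := by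
      intro μ hne
      by_contra hcon
      push_neg at hcon
      set c : ℝ := ⟪W₁ ν, W₁ μ⟫ / ⟪W₁ ν, W₁ ν⟫ with hc
      set k : EuclideanSpace ℝ (Fin d) := W₁ μ - c • W₁ ν with hk
      have hνk : ⟪W₁ ν, k⟫ = 0 := by
        rw [hk, inner_sub_right, real_inner_smul_right, hc,
          div_mul_cancel₀ _ hnn.ne']
        ring
      have hμpk : ⟪W₁ μ, p + k⟫ + b₁ μ = 0 := by
        refine hcon _ ?_
        rw [inner_add_right]
        linarith [hp, hνk]
      have hμp : ⟪W₁ μ, p⟫ + b₁ μ = 0 := hcon _ hp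
      have hμk : ⟪W₁ μ, k⟫ = 0 := by
        rw [inner_add_right] at hμpk; linarith
      have hkk : ⟪k, k⟫ = (0:ℝ) := by
        rw [hk, inner_sub_left, real_inner_smul_left, ← hk, hμk, hνk]
        ring
      have hk0 : k = 0 := inner_self_eq_zero.1 hkk
      have hWμ : W₁ μ = c • W₁ ν := by
        rw [hk, sub_eq_zero] at hk0; exact hk0
      have hbμ : b₁ μ = c * b₁ ν := by
        have h1 : ⟪W₁ μ, p⟫ = c * ⟪W₁ ν, p⟫ := by rw [hWμ, real_inner_smul_left]
        have h2 : ⟪W₁ ν, p⟫ = -(b₁ ν) := by linarith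
        rw [h1, h2] at hμp
        linarith
      exact hcol ν μ hne.symm (Or.inl ⟨c, hWμ, hbμ⟩)
    -- find x₀ on the ν-hyperplane avoiding all others
    have key : ∀ s : Finset (Fin n), ν ∉ s →
        ∃ x, ⟪W₁ ν, x⟫ + b₁ ν = 0 ∧ ∀ μ ∈ s, ⟪W₁ μ, x⟫ + b₁ μ ≠ 0 := by
      intro s
      induction s using Finset.induction_on with
      | empty => exact fun _ => ⟨p, hp, by simp⟩
      | @insert μ₀ s' hμ₀s ih =>
        intro hν
        have hνs : ν ∉ s' := fun h => hν (Finset.mem_insert_of_mem h)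
        have hμ₀ν : μ₀ ≠ ν := by
          rintro rfl; exact hν (Finset.mem_insert_self _ _)
        obtain ⟨x, hx0, hxs⟩ := ih hνs
        by_cases hx : ⟪W₁ μ₀, x⟫ + b₁ μ₀ ≠ 0
        · refine ⟨x, hx0, fun μ hμ => ?_⟩
          rcases Finset.mem_insert.1 hμ with rfl | h
          · exact hx
          · exact hxs μ h
        · push_neg at hx
          obtain ⟨y, hy0, hyμ₀⟩ := hA1 μ₀ hμ₀ν
          set B : Finset ℝ := insert 0 (s'.image (fun μ =>
            (⟪W₁ μ, x⟫ + b₁ μ) /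
              ((⟪W₁ μ, x⟫ + b₁ μ) - (⟪W₁ μ, y⟫ + b₁ μ)))) with hB
          obtain ⟨t, ht⟩ := Infinite.exists_notMem_finset B
          have ht0 : t ≠ 0 := fun h => ht (h ▸ Finset.mem_insert_self _ _)
          have hline : ∀ μ : Fin n, ⟪W₁ μ, x + t • (y - x)⟫ + b₁ μ =
              (⟪W₁ μ, x⟫ + b₁ μ) + t * ((⟪W₁ μ, y⟫ + b₁ μ) - (⟪W₁ μ, x⟫ + b₁ μ)) := by
            intro μ
            rw [inner_add_right, real_inner_smul_right, inner_sub_right]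
            ring
          refine ⟨x + t • (y - x), ?_, ?_⟩
          · rw [hline ν, hx0, hy0]; ring
          · intro μ hμ
            rcases Finset.mem_insert.1 hμ with rfl | hμs
            · rw [hline μ, hx]
              simpa using mul_ne_zero ht0 (by simpa using hyμ₀)
            · rw [hline μ]
              intro h0
              have hgx := hxs μ hμs
              have hden : (⟪W₁ μ, x⟫ + b₁ μ) - (⟪W₁ μ, y⟫ + b₁ μ) ≠ 0 := by
                intro hd
                rw [show (⟪W₁ μ, y⟫ + b₁ μ) - (⟪W₁ μ, x⟫ + b₁ μ) = 0 by linarith,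
                  mul_zero, add_zero] at h0
                exact hgx h0
              have htval : t = (⟪W₁ μ, x⟫ + b₁ μ) /
                  ((⟪W₁ μ, x⟫ + b₁ μ) - (⟪W₁ μ, y⟫ + b₁ μ)) := by
                rw [eq_div_iff hden]
                linear_combination -h0
              exact ht (Finset.mem_insert_of_mem
                (Finset.mem_image.2 ⟨μ, hμs, htval.symm⟩))
    obtain ⟨x₀, hx₀ν, hx₀⟩ := key (Finset.univ.erase ν) (Finset.notMem_erase ν _)
    have hx₀' : ∀ μ, μ ≠ ν → ⟪W₁ μ, x₀⟫ + b₁ μ ≠ 0 := fun μ hμ =>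
      hx₀ μ (Finset.mem_erase.2 ⟨hμ, Finset.mem_univ μ⟩)
    -- choose step size s
    set F : Fin n → ℝ := fun μ => if μ = ν then 1
      else |⟪W₁ μ, x₀⟫ + b₁ μ| / (|⟪W₁ μ, W₁ ν⟫| + 1) with hF
    have hne : (Finset.univ : Finset (Fin n)).Nonempty := ⟨ν, Finset.mem_univ ν⟩
    set s : ℝ := Finset.univ.inf' hne F with hs
    have hspos : 0 < s := by
      rw [hs, Finset.lt_inf'_iff]
      intro μ _
      rw [hF]
      by_cases h : μ = ν
      · simp [h]
      · simp only [h, if_false]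
        have := abs_pos.2 (hx₀' μ h)
        positivity
    have hsb : ∀ μ, μ ≠ ν → s * |⟪W₁ μ, W₁ ν⟫| < |⟪W₁ μ, x₀⟫ + b₁ μ| := by
      intro μ hμ
      have hle : s ≤ F μ := Finset.inf'_le F (Finset.mem_univ μ)
      rw [hF] at hle
      simp only [hμ, if_false] at hle
      have hGpos : 0 < |⟪W₁ μ, x₀⟫ + b₁ μ| := abs_pos.2 (hx₀' μ hμ)
      have hapos : (0:ℝ) ≤ |⟪W₁ μ, W₁ ν⟫| := abs_nonneg _
      have h1 : s * (|⟪W₁ μ, W₁ ν⟫| + 1) ≤ |⟪W₁ μ, x₀⟫ + b₁ μ| :=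
        (le_div_iff₀ (by linarith)).1 hle
      nlinarith [h1, hspos]
    -- the convexity inequality at x₀ along direction W₁ ν
    have hcomb : (1/2 : ℝ) • (x₀ + (-s) • W₁ ν) + (1/2 : ℝ) • (x₀ + s • W₁ ν) = x₀ := by
      module
    have hineq := hconv.2 (Set.mem_univ (x₀ + (-s) • W₁ ν)) (Set.mem_univ (x₀ + s • W₁ ν))
      (by norm_num : (0:ℝ) ≤ 1/2) (by norm_num : (0:ℝ) ≤ 1/2) (by norm_num : (1:ℝ)/2 + 1/2 = 1)
    rw [hcomb] at hineq
    have hin : ∀ (w : EuclideanSpace ℝ (Fin d)) (t : ℝ),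
        ⟪w, x₀ + t • W₁ ν⟫ = ⟪w, x₀⟫ + t * ⟪w, W₁ ν⟫ := by
      intro w t; rw [inner_add_right, real_inner_smul_right]
    simp only [hin, smul_eq_mul] at hineq
    -- pointwise computation of the symmetric second difference
    have hterm : ∀ μ : Fin n,
        w₂ μ * relu (⟪W₁ μ, x₀⟫ + (-s) * ⟪W₁ μ, W₁ ν⟫ + b₁ μ)
        + w₂ μ * relu (⟪W₁ μ, x₀⟫ + s * ⟪W₁ μ, W₁ ν⟫ + b₁ μ)
        - 2 * (w₂ μ * relu (⟪W₁ μ, x₀⟫ + b₁ μ))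
        = if μ = ν then w₂ ν * (s * ⟪W₁ ν, W₁ ν⟫) else 0 := by
      intro μ
      by_cases hμ : μ = ν
      · subst hμ
        have hsnn : 0 < s * ⟪W₁ μ, W₁ μ⟫ := mul_pos hspos (hnnpos μ)
        have e1 : ⟪W₁ μ, x₀⟫ + (-s) * ⟪W₁ μ, W₁ μ⟫ + b₁ μ = -(s * ⟪W₁ μ, W₁ μ⟫) := by
          linarith [hx₀ν]
        have e2 : ⟪W₁ μ, x₀⟫ + s * ⟪W₁ μ, W₁ μ⟫ + b₁ μ = s * ⟪W₁ μ, W₁ μ⟫ := by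
          linarith [hx₀ν]
        rw [e1, e2, hx₀ν, if_pos rfl]
        unfold relu
        rw [max_eq_right (by linarith : -(s * ⟪W₁ μ, W₁ μ⟫) ≤ 0),
          max_eq_left hsnn.le, max_self]
        ring
      · rw [if_neg hμ]
        have hbound := hsb μ hμ
        have h2 : |s * ⟪W₁ μ, W₁ ν⟫| = s * |⟪W₁ μ, W₁ ν⟫| := by
          rw [abs_mul, abs_of_pos hspos]
        have hub : s * ⟪W₁ μ, W₁ ν⟫ ≤ s * |⟪W₁ μ, W₁ ν⟫| := h2 ▸ le_abs_self _
        have hlb : -(s * |⟪W₁ μ, W₁ ν⟫|) ≤ s * ⟪W₁ μ, W₁ ν⟫ := h2 ▸ neg_abs_le _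
        rcases (hx₀' μ hμ).lt_or_gt with hneg | hpos
        · have habs : |⟪W₁ μ, x₀⟫ + b₁ μ| = -(⟪W₁ μ, x₀⟫ + b₁ μ) := abs_of_neg hneg
          rw [habs] at hbound
          unfold relu
          rw [max_eq_right (by linarith : ⟪W₁ μ, x₀⟫ + (-s) * ⟪W₁ μ, W₁ ν⟫ + b₁ μ ≤ 0),
            max_eq_right (by linarith : ⟪W₁ μ, x₀⟫ + s * ⟪W₁ μ, W₁ ν⟫ + b₁ μ ≤ 0),
            max_eq_right hneg.le]
          ring
        · have habs : |⟪W₁ μ, x₀⟫ + b₁ μ| = ⟪W₁ μ, x₀⟫ + b₁ μ := abs_of_pos hpos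
          rw [habs] at hbound
          unfold relu
          rw [max_eq_left (by linarith : 0 ≤ ⟪W₁ μ, x₀⟫ + (-s) * ⟪W₁ μ, W₁ ν⟫ + b₁ μ),
            max_eq_left (by linarith : 0 ≤ ⟪W₁ μ, x₀⟫ + s * ⟪W₁ μ, W₁ ν⟫ + b₁ μ),
            max_eq_left hpos.le]
          ring
    have hsum : ∑ μ, (w₂ μ * relu (⟪W₁ μ, x₀⟫ + (-s) * ⟪W₁ μ, W₁ ν⟫ + b₁ μ)
        + w₂ μ * relu (⟪W₁ μ, x₀⟫ + s * ⟪W₁ μ, W₁ ν⟫ + b₁ μ)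
        - 2 * (w₂ μ * relu (⟪W₁ μ, x₀⟫ + b₁ μ)))
        = w₂ ν * (s * ⟪W₁ ν, W₁ ν⟫) := by
      rw [Finset.sum_congr rfl (fun μ _ => hterm μ)]
      simp
    rw [Finset.sum_sub_distrib, Finset.sum_add_distrib, ← Finset.mul_sum] at hsum
    have hfinal : 0 ≤ w₂ ν * (s * ⟪W₁ ν, W₁ ν⟫) := by linarith [hineq, hsum]
    nlinarith [hfinal, mul_pos hspos hnn]
  · -- easy direction
    intro hw
    refine ⟨convex_univ, ?_⟩
    intro x _ y _ a b ha hb hab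
    have hin : ∀ w : EuclideanSpace ℝ (Fin d),
        ⟪w, a•x + b•y⟫ = a*⟪w,x⟫ + b*⟪w,y⟫ := by
      intro w; rw [inner_add_right, real_inner_smul_right, real_inner_smul_right]
    simp only [hin, smul_eq_mul]
    have hsum : ∑ μ, w₂ μ * relu (a*⟪W₁ μ, x⟫ + b*⟪W₁ μ, y⟫ + b₁ μ) ≤
        ∑ μ, (a * (w₂ μ * relu (⟪W₁ μ, x⟫ + b₁ μ)) +
          b * (w₂ μ * relu (⟪W₁ μ, y⟫ + b₁ μ))) := by
      refine Finset.sum_le_sum fun μ _ => ?_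
      have h : a*⟪W₁ μ, x⟫ + b*⟪W₁ μ, y⟫ + b₁ μ
          = a*(⟪W₁ μ, x⟫ + b₁ μ) + b*(⟪W₁ μ, y⟫ + b₁ μ) := by
        have : b₁ μ = a * b₁ μ + b * b₁ μ := by rw [← add_mul, hab, one_mul]
        linarith
      rw [h]
      have := relu_comb (u := ⟪W₁ μ, x⟫ + b₁ μ) (v := ⟪W₁ μ, y⟫ + b₁ μ) ha hb
      nlinarith [hw μ, this]
    rw [Finset.sum_add_distrib] at hsum
    simp only [← Finset.mul_sum] at hsum
    have h1 : b₂ = a * b₂ + b * b₂ := by rw [← add_mul, hab, one_mul]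
    nlinarith [hsum]
end

section
/- Let f : ℝ^d → ℝ be a convex function that can be written as f(x) = w₂ᵀ ReLU(W₁ x + b₁) + b₂ + v₂ᵀ x for some W₁ ∈ ℝ^{n×d}, b₁, w₂ ∈ ℝ^n, v₂ ∈ ℝ^d, b₂ ∈ ℝ (a one-hidden-layer ReLU network of width n with weighted input skip connection). Then there exist parameters W₁' ∈ ℝ^{n×d}, b₁', w₂' ∈ ℝ^n, v₂' ∈ ℝ^d, b₂' ∈ ℝ with all entries of w₂' nonnegative such that f(x) = w₂'ᵀ ReLU(W₁' x + b₁') + b₂' + v₂'ᵀ x for all x ∈ ℝ^d. In other words, every convex function implemented by a one-hidden-layer ReLU network with weighted input skip connections of width n is also implemented by a one-hidden-layer ICNN of the same width n. -/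
open Set Metric
open scoped RealInnerProductSpace

lemma relu_eq (t : ℝ) : relu t = (t + |t|) / 2 := by
  rw [relu]
  rcases le_total 0 t with h | h
  · rw [max_eq_left h, abs_of_nonneg h]; ring
  · rw [max_eq_right h, abs_of_nonpos h]; ring


section Aux
open scoped Classical
variable {d n : ℕ} (W₁ : Fin n → EuclideanSpace ℝ (Fin d)) (b₁ : Fin n → ℝ)

/-- Two neurons are parallel if one's affine functional is a scalar multiple of the other's. -/
def parRel (ν μ : Fin n) : Prop := ∃ t : ℝ, W₁ μ = t • W₁ ν ∧ b₁ μ = t * b₁ ν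

/-- Indices of neurons with nonzero weight vector. -/
noncomputable def Pset : Finset (Fin n) := Finset.univ.filter (fun ν => W₁ ν ≠ 0)

/-- The parallel class of a neuron. -/
noncomputable def clsOf (ν : Fin n) : Finset (Fin n) :=
  (Pset W₁).filter (fun μ => parRel W₁ b₁ ν μ)

/-- A canonical representative of the parallel class. -/
noncomputable def repFn (ν : Fin n) : Fin n :=
  if h : (clsOf W₁ b₁ ν).Nonempty then (clsOf W₁ b₁ ν).min' h else ν

/-- The ratio of neuron `μ` to neuron `ℓ`. -/
noncomputable def tfun (ℓ μ : Fin n) : ℝ := ⟪W₁ ℓ, W₁ μ⟫ / ‖W₁ ℓ‖ ^ 2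

noncomputable def Sval (c : Fin n → ℝ) (ℓ : Fin n) : ℝ :=
  ∑ μ ∈ clsOf W₁ b₁ ℓ, c μ * |tfun W₁ ℓ μ|

lemma mem_Pset {ν : Fin n} : ν ∈ Pset W₁ ↔ W₁ ν ≠ 0 := by
  simp [Pset]

lemma par_refl (ν : Fin n) : parRel W₁ b₁ ν ν := ⟨1, by simp⟩

lemma par_symm {ν μ : Fin n} (hμ : W₁ μ ≠ 0) (h : parRel W₁ b₁ ν μ) : parRel W₁ b₁ μ ν := by
  obtain ⟨t, h1, h2⟩ := h
  have ht : t ≠ 0 := by rintro rfl; simp at h1; exact hμ h1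
  refine ⟨t⁻¹, ?_, ?_⟩
  · rw [h1, smul_smul, inv_mul_cancel₀ ht, one_smul]
  · rw [h2]; field_simp

lemma par_trans {ν μ ρ : Fin n} (h : parRel W₁ b₁ ν μ) (h' : parRel W₁ b₁ μ ρ) :
    parRel W₁ b₁ ν ρ := by
  obtain ⟨t, h1, h2⟩ := h
  obtain ⟨s, h1', h2'⟩ := h'
  exact ⟨s * t, by rw [h1', h1, smul_smul], by rw [h2', h2]; ring⟩

lemma mem_clsOf {ν μ : Fin n} : μ ∈ clsOf W₁ b₁ ν ↔ W₁ μ ≠ 0 ∧ parRel W₁ b₁ ν μ := by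
  simp [clsOf, Pset]

lemma clsOf_eq_of_par {ν μ : Fin n} (hν : W₁ ν ≠ 0) (hμ : W₁ μ ≠ 0)
    (h : parRel W₁ b₁ ν μ) : clsOf W₁ b₁ ν = clsOf W₁ b₁ μ := by
  ext ρ
  simp only [mem_clsOf]
  constructor
  · rintro ⟨hρ, hp⟩
    exact ⟨hρ, par_trans W₁ b₁ (par_symm W₁ b₁ hμ h) hp⟩
  · rintro ⟨hρ, hp⟩
    exact ⟨hρ, par_trans W₁ b₁ h hp⟩

lemma repFn_mem {ν : Fin n} (hν : W₁ ν ≠ 0) : repFn W₁ b₁ ν ∈ clsOf W₁ b₁ ν := by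
  have hne : (clsOf W₁ b₁ ν).Nonempty :=
    ⟨ν, (mem_clsOf W₁ b₁).mpr ⟨hν, par_refl W₁ b₁ ν⟩⟩
  rw [repFn, dif_pos hne]
  exact Finset.min'_mem _ hne

lemma repFn_eq_of_par {ν μ : Fin n} (hν : W₁ ν ≠ 0) (hμ : W₁ μ ≠ 0)
    (h : parRel W₁ b₁ ν μ) : repFn W₁ b₁ ν = repFn W₁ b₁ μ := by
  have hne : (clsOf W₁ b₁ μ).Nonempty :=
    ⟨μ, (mem_clsOf W₁ b₁).mpr ⟨hμ, par_refl W₁ b₁ μ⟩⟩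
  rw [repFn, repFn, clsOf_eq_of_par W₁ b₁ hν hμ h, dif_pos hne, dif_pos hne]

lemma repFn_idem {ν : Fin n} (hν : W₁ ν ≠ 0) :
    repFn W₁ b₁ (repFn W₁ b₁ ν) = repFn W₁ b₁ ν := by
  have h := repFn_mem W₁ b₁ hν
  rw [mem_clsOf] at h
  exact (repFn_eq_of_par W₁ b₁ hν h.1 h.2).symm

lemma tfun_spec {ℓ μ : Fin n} (hℓ : W₁ ℓ ≠ 0) (h : parRel W₁ b₁ ℓ μ) :
    W₁ μ = tfun W₁ ℓ μ • W₁ ℓ ∧ b₁ μ = tfun W₁ ℓ μ * b₁ ℓ := by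
  obtain ⟨t, h1, h2⟩ := h
  have hn : ‖W₁ ℓ‖ ^ 2 ≠ 0 := pow_ne_zero 2 (norm_ne_zero_iff.mpr hℓ)
  have ht : tfun W₁ ℓ μ = t := by
    rw [tfun, h1, real_inner_smul_right, real_inner_self_eq_norm_sq]
    field_simp
  rw [ht]; exact ⟨h1, h2⟩

end Aux


section Aux2
variable {d n : ℕ}

lemma absh1 (A e : ℝ) (h : |e| ≤ |A|) : |A + e| + |A - e| = 2 * |A| := by
  rcases le_total 0 A with hA | hA
  · rw [abs_of_nonneg hA] at h ⊢
    have h1 : -A ≤ e := by have := neg_abs_le e; linarith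
    have h2 : e ≤ A := le_trans (le_abs_self e) h
    rw [abs_of_nonneg (by linarith), abs_of_nonneg (by linarith)]; ring
  · rw [abs_of_nonpos hA] at h ⊢
    have h1 : e ≤ -A := le_trans (le_abs_self e) h
    have h2 : A ≤ e := by have := neg_abs_le e; linarith
    rw [abs_of_nonpos (by linarith), abs_of_nonpos (by linarith)]; ring

lemma subs_lin (A B : ℝ) (h : ¬(A = 0 ∧ B = 0)) : {t : ℝ | A + t * B = 0}.Subsingleton := by
  rcases eq_or_ne B 0 with hB | hB
  · intro t ht u hu
    exfalso; apply h
    simp [hB] at ht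
    exact ⟨ht, hB⟩
  · intro t ht u hu
    simp only [Set.mem_setOf_eq] at ht hu
    have : t * B = u * B := by linarith
    exact mul_right_cancel₀ hB this

lemma generic_point {ι : Type*} (V₀ : Submodule ℝ (EuclideanSpace ℝ (Fin d)))
    (s : Finset ι) (w : ι → EuclideanSpace ℝ (Fin d)) (c : ι → ℝ)
    (h : ∀ i ∈ s, ∃ y ∈ V₀, ⟪w i, y⟫ + c i ≠ 0) :
    ∃ y ∈ V₀, ∀ i ∈ s, ⟪w i, y⟫ + c i ≠ 0 := by
  classical
  induction s using Finset.induction_on with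
  | empty => exact ⟨0, V₀.zero_mem, by simp⟩
  | insert _ _ hi ih =>
    rename_i a s
    obtain ⟨y, hyV, hy⟩ := ih (fun i his => h i (Finset.mem_insert_of_mem his))
    obtain ⟨y', hy'V, hy'⟩ := h a (Finset.mem_insert_self a s)
    set bad : Set ℝ := ⋃ j ∈ insert a s, {t : ℝ | (⟪w j, y⟫ + c j) + t * ⟪w j, y' - y⟫ = 0}
    have hbadfin : bad.Finite := by
      apply Set.Finite.biUnion (Finset.finite_toSet _)
      intro j hj
      rw [Finset.mem_coe, Finset.mem_insert] at hj
      apply Set.Subsingleton.finite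
      apply subs_lin
      rcases hj with rfl | hj
      · rintro ⟨h1, h2⟩
        apply hy'
        have : ⟪w j, y'⟫ = ⟪w j, y⟫ + ⟪w j, y' - y⟫ := by
          rw [← inner_add_right]; congr 1; abel
        rw [this]; linarith
      · rintro ⟨h1, h2⟩
        exact hy j hj (by linarith)
    obtain ⟨t, ht⟩ := (hbadfin.infinite_compl).nonempty
    refine ⟨y + t • (y' - y), V₀.add_mem hyV (V₀.smul_mem t (V₀.sub_mem hy'V hyV)), ?_⟩
    intro i his
    have hcalc : ⟪w i, y + t • (y' - y)⟫ + c i = (⟪w i, y⟫ + c i) + t * ⟪w i, y' - y⟫ := by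
      rw [inner_add_right, real_inner_smul_right]; ring
    rw [hcalc]
    intro hzero
    exact ht (Set.mem_biUnion his hzero)

variable (W₁ : Fin n → EuclideanSpace ℝ (Fin d)) (b₁ : Fin n → ℝ)

set_option maxHeartbeats 1000000 in
/-- If the "second difference" functional of the network is nonnegative everywhere
(a consequence of convexity), then the total weight of every parallel class is
nonnegative. -/
lemma Sval_nonneg (c : Fin n → ℝ)
    (hsec : ∀ x u : EuclideanSpace ℝ (Fin d), 0 ≤ ∑ ν,
      c ν * (|(⟪W₁ ν, x⟫ + b₁ ν) + ⟪W₁ ν, u⟫| + |(⟪W₁ ν, x⟫ + b₁ ν) - ⟪W₁ ν, u⟫|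
        - 2 * |⟪W₁ ν, x⟫ + b₁ ν|))
    {ℓ : Fin n} (hℓ : W₁ ℓ ≠ 0) : 0 ≤ Sval W₁ b₁ c ℓ := by
  classical
  have hn2 : (0:ℝ) < ‖W₁ ℓ‖ ^ 2 := pow_pos (norm_pos_iff.mpr hℓ) 2
  set p : EuclideanSpace ℝ (Fin d) := (-(b₁ ℓ) / ‖W₁ ℓ‖ ^ 2) • W₁ ℓ with hp
  have hinnerp : ⟪W₁ ℓ, p⟫ = -(b₁ ℓ) := by
    rw [hp, real_inner_smul_right, real_inner_self_eq_norm_sq]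
    field_simp
  set V₀ : Submodule ℝ (EuclideanSpace ℝ (Fin d)) := (ℝ ∙ W₁ ℓ)ᗮ with hV₀
  set s' : Finset (Fin n) := (Pset W₁).filter (fun μ => ¬ parRel W₁ b₁ ℓ μ) with hs'
  -- each non-parallel active neuron is non-vanishing somewhere on the hyperplane
  have hkey : ∀ μ ∈ s', ∃ y ∈ V₀, ⟪W₁ μ, y⟫ + (⟪W₁ μ, p⟫ + b₁ μ) ≠ 0 := by
    intro μ hμ
    rw [hs', Finset.mem_filter, mem_Pset] at hμ
    obtain ⟨hμ0, hμnp⟩ := hμ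
    by_contra hcon
    push_neg at hcon
    have h0 : ⟪W₁ μ, p⟫ + b₁ μ = 0 := by
      have := hcon 0 V₀.zero_mem
      simpa using this
    have hall : ∀ y ∈ V₀, ⟪W₁ μ, y⟫ = 0 := by
      intro y hy
      have := hcon y hy
      rw [h0] at this
      simpa using this
    have hmem : W₁ μ ∈ V₀ᗮ := by
      rw [Submodule.mem_orthogonal]
      intro u hu
      rw [real_inner_comm]
      exact hall u hu
    rw [hV₀, Submodule.orthogonal_orthogonal, Submodule.mem_span_singleton] at hmem
    obtain ⟨t, htt⟩ := hmem
    apply hμnp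
    refine ⟨t, htt.symm, ?_⟩
    rw [← htt, real_inner_smul_left, hinnerp] at h0
    linarith
  obtain ⟨y, hyV, hy⟩ := generic_point V₀ s' W₁ (fun μ => ⟪W₁ μ, p⟫ + b₁ μ) hkey
  set x : EuclideanSpace ℝ (Fin d) := p + y with hx
  have hy0 : ⟪W₁ ℓ, y⟫ = 0 := by
    rw [hV₀, Submodule.mem_orthogonal] at hyV
    exact hyV (W₁ ℓ) (Submodule.mem_span_singleton_self _)
  have haℓ : ⟪W₁ ℓ, x⟫ + b₁ ℓ = 0 := by
    rw [hx, inner_add_right, hinnerp, hy0]; ring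
  have hacls : ∀ μ ∈ clsOf W₁ b₁ ℓ, ⟪W₁ μ, x⟫ + b₁ μ = 0 := by
    intro μ hμ
    rw [mem_clsOf] at hμ
    obtain ⟨ht1, ht2⟩ := tfun_spec W₁ b₁ hℓ hμ.2
    rw [ht1, ht2, real_inner_smul_left]
    rw [show tfun W₁ ℓ μ * ⟪W₁ ℓ, x⟫ + tfun W₁ ℓ μ * b₁ ℓ
      = tfun W₁ ℓ μ * (⟪W₁ ℓ, x⟫ + b₁ ℓ) from by ring, haℓ, mul_zero]
  have has' : ∀ μ ∈ s', ⟪W₁ μ, x⟫ + b₁ μ ≠ 0 := by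
    intro μ hμ
    have := hy μ hμ
    rw [hx, inner_add_right]
    intro hzero
    exact this (by linarith)
  -- choose a small ε
  set g : Fin n → ℝ := fun μ => |⟪W₁ μ, x⟫ + b₁ μ| / (|⟪W₁ μ, W₁ ℓ⟫| + 1) with hg
  set T : Finset ℝ := insert (1:ℝ) (s'.image g) with hT
  have hTne : T.Nonempty := ⟨1, Finset.mem_insert_self _ _⟩
  set ε : ℝ := T.min' hTne with hε
  have hTpos : ∀ r ∈ T, 0 < r := by
    intro r hr
    rw [hT, Finset.mem_insert] at hr
    rcases hr with rfl | hr
    · norm_num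
    · obtain ⟨μ, hμ, rfl⟩ := Finset.mem_image.mp hr
      have := has' μ hμ
      rw [hg]
      have h1 : 0 < |⟪W₁ μ, x⟫ + b₁ μ| := abs_pos.mpr this
      have h2 : 0 < |⟪W₁ μ, W₁ ℓ⟫| + 1 := by positivity
      exact div_pos h1 h2
  have hε0 : 0 < ε := by rw [hε]; exact hTpos _ (T.min'_mem hTne)
  have hεle : ∀ μ ∈ s', ε * |⟪W₁ μ, W₁ ℓ⟫| ≤ |⟪W₁ μ, x⟫ + b₁ μ| := by
    intro μ hμ
    have h1 : ε ≤ g μ := T.min'_le _ (Finset.mem_insert_of_mem (Finset.mem_image_of_mem g hμ))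
    have hq : (0:ℝ) ≤ |⟪W₁ μ, W₁ ℓ⟫| := abs_nonneg _
    have hA : (0:ℝ) ≤ |⟪W₁ μ, x⟫ + b₁ μ| := abs_nonneg _
    have h2 : ε * |⟪W₁ μ, W₁ ℓ⟫| ≤ g μ * |⟪W₁ μ, W₁ ℓ⟫| :=
      mul_le_mul_of_nonneg_right h1 hq
    refine le_trans h2 ?_
    rw [hg]
    rw [div_mul_eq_mul_div, div_le_iff₀ (by positivity)]
    nlinarith [mul_nonneg hA hq]
  -- apply the second difference inequality
  have hmain := hsec x (ε • W₁ ℓ)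
  have hinu : ∀ ν, ⟪W₁ ν, ε • W₁ ℓ⟫ = ε * ⟪W₁ ν, W₁ ℓ⟫ := fun ν => real_inner_smul_right _ _ _
  set D : Fin n → ℝ := fun ν =>
    |(⟪W₁ ν, x⟫ + b₁ ν) + ⟪W₁ ν, ε • W₁ ℓ⟫| + |(⟪W₁ ν, x⟫ + b₁ ν) - ⟪W₁ ν, ε • W₁ ℓ⟫|
      - 2 * |⟪W₁ ν, x⟫ + b₁ ν| with hD
  have hsum1 : ∑ ν, c ν * D ν = ∑ μ ∈ clsOf W₁ b₁ ℓ, c μ * D μ := by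
    symm
    apply Finset.sum_subset (Finset.subset_univ _)
    intro ν _ hν
    rcases eq_or_ne (W₁ ν) 0 with h0 | h0
    · simp only [hD, h0, inner_zero_left]
      exact mul_eq_zero_of_right _ (by ring)
    · have hνs' : ν ∈ s' := by
        rw [hs', Finset.mem_filter, mem_Pset]
        refine ⟨h0, fun hpar => hν ?_⟩
        rw [mem_clsOf]; exact ⟨h0, hpar⟩
      have habs : |⟪W₁ ν, ε • W₁ ℓ⟫| ≤ |⟪W₁ ν, x⟫ + b₁ ν| := by
        rw [hinu, abs_mul, abs_of_pos hε0]
        exact hεle ν hνs'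
      simp only [hD]
      rw [absh1 _ _ habs]
      ring
  have hsum2 : ∑ μ ∈ clsOf W₁ b₁ ℓ, c μ * D μ = (2 * ε * ‖W₁ ℓ‖ ^ 2) * Sval W₁ b₁ c ℓ := by
    rw [Sval, Finset.mul_sum]
    apply Finset.sum_congr rfl
    intro μ hμ
    have ha0 := hacls μ hμ
    rw [mem_clsOf] at hμ
    obtain ⟨ht1, _⟩ := tfun_spec W₁ b₁ hℓ hμ.2
    have hin : ⟪W₁ μ, W₁ ℓ⟫ = tfun W₁ ℓ μ * ‖W₁ ℓ‖ ^ 2 := by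
      rw [ht1, real_inner_smul_left, real_inner_self_eq_norm_sq]
    simp only [hD]
    rw [ha0, hinu, hin]
    rw [show (0:ℝ) + ε * (tfun W₁ ℓ μ * ‖W₁ ℓ‖ ^ 2) = ε * (tfun W₁ ℓ μ * ‖W₁ ℓ‖ ^ 2) from by ring,
      show (0:ℝ) - ε * (tfun W₁ ℓ μ * ‖W₁ ℓ‖ ^ 2) = -(ε * (tfun W₁ ℓ μ * ‖W₁ ℓ‖ ^ 2)) from by ring,
      abs_neg, abs_mul, abs_mul, abs_of_pos hε0, abs_of_pos hn2, abs_zero]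
    ring
  rw [hsum1, hsum2] at hmain
  have hpos : (0:ℝ) < 2 * ε * ‖W₁ ℓ‖ ^ 2 := by positivity
  exact (mul_nonneg_iff_of_pos_left hpos).mp hmain
end Aux2

/-- Every convex function implemented by a one-hidden-layer ReLU network of width `n`
with weighted input skip connection is also implemented by a one-hidden-layer ICNN of
the same width `n`: there are parameters with nonnegative output weights `w₂'`
implementing the same function. -/
theorem convex_oneHiddenLayer_implementable_by_ICNN {d n : ℕ}
    (f : EuclideanSpace ℝ (Fin d) → ℝ)
    (W₁ : Fin n → EuclideanSpace ℝ (Fin d)) (b₁ w₂ : Fin n → ℝ)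
    (v₂ : EuclideanSpace ℝ (Fin d)) (b₂ : ℝ)
    (hf : ∀ x, f x = ∑ ν, w₂ ν * relu (⟪W₁ ν, x⟫ + b₁ ν) + b₂ + ⟪v₂, x⟫)
    (hconv : ConvexOn ℝ Set.univ f) :
    ∃ (W₁' : Fin n → EuclideanSpace ℝ (Fin d)) (b₁' w₂' : Fin n → ℝ)
      (v₂' : EuclideanSpace ℝ (Fin d)) (b₂' : ℝ),
      (∀ ν, 0 ≤ w₂' ν) ∧
      ∀ x, f x = ∑ ν, w₂' ν * relu (⟪W₁' ν, x⟫ + b₁' ν) + b₂' + ⟪v₂', x⟫ := by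
  classical
  set c : Fin n → ℝ := fun ν => w₂ ν / 2 with hc
  set V : EuclideanSpace ℝ (Fin d) := v₂ + ∑ ν, c ν • W₁ ν with hV
  set B : ℝ := b₂ + ∑ ν, c ν * b₁ ν with hB
  -- representation via absolute values
  have hrepr : ∀ x, f x = ⟪V, x⟫ + B + ∑ ν, c ν * |⟪W₁ ν, x⟫ + b₁ ν| := by
    intro x
    rw [hf x]
    have e1 : ∑ ν, w₂ ν * relu (⟪W₁ ν, x⟫ + b₁ ν)
        = (∑ ν, c ν * (⟪W₁ ν, x⟫ + b₁ ν)) + ∑ ν, c ν * |⟪W₁ ν, x⟫ + b₁ ν| := by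
      rw [← Finset.sum_add_distrib]
      apply Finset.sum_congr rfl
      intro ν _
      rw [relu_eq, hc]
      ring
    have e2 : ∑ ν, c ν * (⟪W₁ ν, x⟫ + b₁ ν)
        = ⟪∑ ν, c ν • W₁ ν, x⟫ + ∑ ν, c ν * b₁ ν := by
      rw [sum_inner, ← Finset.sum_add_distrib]
      apply Finset.sum_congr rfl
      intro ν _
      rw [real_inner_smul_left]
      ring
    have e3 : ⟪V, x⟫ = ⟪v₂, x⟫ + ⟪∑ ν, c ν • W₁ ν, x⟫ := by
      rw [hV, inner_add_left]
    rw [e1, e2, e3, hB]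
    ring
  -- the second-difference inequality
  have hsec : ∀ x u : EuclideanSpace ℝ (Fin d), 0 ≤ ∑ ν,
      c ν * (|(⟪W₁ ν, x⟫ + b₁ ν) + ⟪W₁ ν, u⟫| + |(⟪W₁ ν, x⟫ + b₁ ν) - ⟪W₁ ν, u⟫|
        - 2 * |⟪W₁ ν, x⟫ + b₁ ν|) := by
    intro x u
    have hc2 := hconv.2 (Set.mem_univ (x + u)) (Set.mem_univ (x - u))
      (by norm_num : (0:ℝ) ≤ 1/2) (by norm_num : (0:ℝ) ≤ 1/2) (by norm_num)
    have hmid : (1/2 : ℝ) • (x + u) + (1/2 : ℝ) • (x - u) = x := by module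
    rw [hmid, hrepr x, hrepr (x + u), hrepr (x - u)] at hc2
    have hVlin : ⟪V, x + u⟫ + ⟪V, x - u⟫ = 2 * ⟪V, x⟫ := by
      rw [inner_add_right, inner_sub_right]; ring
    have expand : ∑ ν, c ν * (|(⟪W₁ ν, x⟫ + b₁ ν) + ⟪W₁ ν, u⟫| + |(⟪W₁ ν, x⟫ + b₁ ν) - ⟪W₁ ν, u⟫|
          - 2 * |⟪W₁ ν, x⟫ + b₁ ν|)
        = (∑ ν, c ν * |⟪W₁ ν, x + u⟫ + b₁ ν|) + (∑ ν, c ν * |⟪W₁ ν, x - u⟫ + b₁ ν|)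
          - 2 * ∑ ν, c ν * |⟪W₁ ν, x⟫ + b₁ ν| := by
      rw [Finset.mul_sum, ← Finset.sum_add_distrib, ← Finset.sum_sub_distrib]
      apply Finset.sum_congr rfl
      intro ν _
      rw [inner_add_right, inner_sub_right,
        show ⟪W₁ ν, x⟫ + ⟪W₁ ν, u⟫ + b₁ ν = (⟪W₁ ν, x⟫ + b₁ ν) + ⟪W₁ ν, u⟫ from by ring,
        show ⟪W₁ ν, x⟫ - ⟪W₁ ν, u⟫ + b₁ ν = (⟪W₁ ν, x⟫ + b₁ ν) - ⟪W₁ ν, u⟫ from by ring]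
      ring
    rw [expand]
    simp only [smul_eq_mul] at hc2
    linarith
  -- the set of class leaders
  set L : Finset (Fin n) := (Pset W₁).filter (fun ℓ => repFn W₁ b₁ ℓ = ℓ) with hL
  have hLne : ∀ ℓ ∈ L, W₁ ℓ ≠ 0 := by
    intro ℓ hℓ
    rw [hL, Finset.mem_filter, mem_Pset] at hℓ
    exact hℓ.1
  -- grouping of the sum by parallel classes
  have hgroup : ∀ x, ∑ ν ∈ Pset W₁, c ν * |⟪W₁ ν, x⟫ + b₁ ν|
      = ∑ ℓ ∈ L, Sval W₁ b₁ c ℓ * |⟪W₁ ℓ, x⟫ + b₁ ℓ| := by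
    intro x
    have hmaps : ∀ ν ∈ Pset W₁, repFn W₁ b₁ ν ∈ L := by
      intro ν hν
      rw [mem_Pset] at hν
      have h1 := repFn_mem W₁ b₁ hν
      rw [mem_clsOf] at h1
      rw [hL, Finset.mem_filter, mem_Pset]
      exact ⟨h1.1, repFn_idem W₁ b₁ hν⟩
    rw [← Finset.sum_fiberwise_of_maps_to hmaps (fun ν => c ν * |⟪W₁ ν, x⟫ + b₁ ν|)]
    apply Finset.sum_congr rfl
    intro ℓ hℓ
    have hℓ0 : W₁ ℓ ≠ 0 := hLne ℓ hℓ
    have hℓrep : repFn W₁ b₁ ℓ = ℓ := by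
      rw [hL, Finset.mem_filter] at hℓ; exact hℓ.2
    have hfib : (Pset W₁).filter (fun ν => repFn W₁ b₁ ν = ℓ) = clsOf W₁ b₁ ℓ := by
      ext ν
      rw [Finset.mem_filter, mem_Pset, mem_clsOf]
      constructor
      · rintro ⟨hν0, hνr⟩
        have h1 := repFn_mem W₁ b₁ hν0
        rw [mem_clsOf, hνr] at h1
        exact ⟨hν0, par_symm W₁ b₁ hℓ0 h1.2⟩
      · rintro ⟨hν0, hpar⟩
        exact ⟨hν0, by rw [← repFn_eq_of_par W₁ b₁ hℓ0 hν0 hpar, hℓrep]⟩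
    rw [hfib, Sval, Finset.sum_mul]
    apply Finset.sum_congr rfl
    intro μ hμ
    rw [mem_clsOf] at hμ
    obtain ⟨ht1, ht2⟩ := tfun_spec W₁ b₁ hℓ0 hμ.2
    rw [ht1, ht2, real_inner_smul_left,
      show tfun W₁ ℓ μ * ⟪W₁ ℓ, x⟫ + tfun W₁ ℓ μ * b₁ ℓ
        = tfun W₁ ℓ μ * (⟪W₁ ℓ, x⟫ + b₁ ℓ) from by ring, abs_mul]
    ring
  -- splitting off the zero-weight neurons
  set Z : Finset (Fin n) := Finset.univ.filter (fun ν => ¬ W₁ ν ≠ 0) with hZ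
  have hsplit : ∀ x, ∑ ν, c ν * |⟪W₁ ν, x⟫ + b₁ ν|
      = (∑ ν ∈ Pset W₁, c ν * |⟪W₁ ν, x⟫ + b₁ ν|) + ∑ ν ∈ Z, c ν * |b₁ ν| := by
    intro x
    rw [← Finset.sum_filter_add_sum_filter_not Finset.univ (fun ν => W₁ ν ≠ 0)
      (fun ν => c ν * |⟪W₁ ν, x⟫ + b₁ ν|)]
    congr 1
    apply Finset.sum_congr rfl
    intro ν hν
    simp only [Finset.mem_filter, not_not] at hν
    rw [hν.2, inner_zero_left, zero_add]
  -- final parameters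
  refine ⟨fun ν => if ν ∈ L then W₁ ν else 0,
    fun ν => if ν ∈ L then b₁ ν else 0,
    fun ν => if ν ∈ L then 2 * Sval W₁ b₁ c ν else 0,
    V - ∑ ℓ ∈ L, Sval W₁ b₁ c ℓ • W₁ ℓ,
    B + (∑ ν ∈ Z, c ν * |b₁ ν|) - ∑ ℓ ∈ L, Sval W₁ b₁ c ℓ * b₁ ℓ, ?_, ?_⟩
  · intro ν
    beta_reduce
    by_cases h : ν ∈ L
    · rw [if_pos h]
      have := Sval_nonneg W₁ b₁ c hsec (hLne ν h)
      linarith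
    · rw [if_neg h]
  · intro x
    beta_reduce
    have hsum : ∑ ν, (if ν ∈ L then 2 * Sval W₁ b₁ c ν else 0)
          * relu (⟪(if ν ∈ L then W₁ ν else 0), x⟫ + (if ν ∈ L then b₁ ν else 0))
        = ∑ ℓ ∈ L, (Sval W₁ b₁ c ℓ * ⟪W₁ ℓ, x⟫ + Sval W₁ b₁ c ℓ * b₁ ℓ
            + Sval W₁ b₁ c ℓ * |⟪W₁ ℓ, x⟫ + b₁ ℓ|) := by
      rw [← Finset.sum_subset (Finset.subset_univ L) (by
        intro ν _ hν
        rw [if_neg hν, zero_mul])]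
      apply Finset.sum_congr rfl
      intro ℓ hℓ
      rw [if_pos hℓ, if_pos hℓ, if_pos hℓ, relu_eq]
      ring
    rw [hsum]
    have hsplit2 : ∑ ℓ ∈ L, (Sval W₁ b₁ c ℓ * ⟪W₁ ℓ, x⟫ + Sval W₁ b₁ c ℓ * b₁ ℓ
          + Sval W₁ b₁ c ℓ * |⟪W₁ ℓ, x⟫ + b₁ ℓ|)
        = ⟪∑ ℓ ∈ L, Sval W₁ b₁ c ℓ • W₁ ℓ, x⟫ + (∑ ℓ ∈ L, Sval W₁ b₁ c ℓ * b₁ ℓ)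
          + ∑ ℓ ∈ L, Sval W₁ b₁ c ℓ * |⟪W₁ ℓ, x⟫ + b₁ ℓ| := by
      rw [sum_inner, ← Finset.sum_add_distrib, ← Finset.sum_add_distrib]
      apply Finset.sum_congr rfl
      intro ℓ _
      rw [real_inner_smul_left]
    rw [hsplit2, inner_sub_left, sum_inner, hrepr x, hsplit x, hgroup x]
    ring
end

section
/- Let f_θ : ℝ^d → ℝ be the one-hidden-layer ReLU network f_θ(x) = w₂ᵀ ReLU(W₁ x + b₁) + b₂ with W₁ ∈ ℝ^{n×d}, b₁, w₂ ∈ ℝ^n, b₂ ∈ ℝ. Suppose every row W₁[ν,:] is nonzero and for every pair of distinct neurons ν₁ ≠ ν₂ the augmented rows (W₁[ν₁,:] | b₁[ν₁]) and (W₁[ν₂,:] | b₁[ν₂]) in ℝ^{d+1} are not colinear. Then: (1) 𝔛_ν ≠ ∅ for every ν ∈ {1,…,n}; and (2) for every x ∈ ℝ^d such that f_θ is not affine on any ball B(x,ε) and x lies on exactly one hyperplane H_ν = {y : W₁[ν,:]y + b₁[ν] = 0} among the hyperplanes of the network — equivalently, for every frontier point x of a compatible polyhedral partition at which f_θ is not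 locally affine — one has x ∈ ⋃_{ν=1}^n 𝔛_ν. -/
open Set Metric
open scoped RealInnerProductSpace

lemma half_lt' {ε a : ℝ} (hε : 0 < ε) (ha : 0 < a) : ε / (2 * a) * a < ε := by
  have h : ε / (2 * a) * a = ε / 2 := by field_simp
  rw [h]; linarith

lemma memXiso {d n : ℕ} (W₁ : Fin n → EuclideanSpace ℝ (Fin d)) (b₁ : Fin n → ℝ)
    (ν : Fin n) (hWν : W₁ ν ≠ 0) (x : EuclideanSpace ℝ (Fin d))
    (hx : ⟪W₁ ν, x⟫ + b₁ ν = 0) (hμ : ∀ μ, μ ≠ ν → ⟪W₁ μ, x⟫ + b₁ μ ≠ 0) :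
    x ∈ Xiso (fun μ (y : EuclideanSpace ℝ (Fin d)) => ⟪W₁ μ, y⟫ + b₁ μ) ν := by
  set z : Fin n → EuclideanSpace ℝ (Fin d) → ℝ :=
    fun μ y => ⟪W₁ μ, y⟫ + b₁ μ with hz
  have hzc : ∀ μ, Continuous (z μ) := fun μ => by
    exact ((continuous_const.inner continuous_id).add continuous_const)
  -- open set where all μ ≠ ν keep sign
  set V : Set (EuclideanSpace ℝ (Fin d)) :=
    ⋂ μ, {y | μ ≠ ν → 0 < z μ x * z μ y} with hV
  have hVopen : IsOpen V := by
    apply isOpen_iInter_of_finite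
    intro μ
    by_cases h : μ = ν
    · have : {y : EuclideanSpace ℝ (Fin d) | μ ≠ ν → 0 < z μ x * z μ y} = univ := by
        ext y; simp [h]
      rw [this]; exact isOpen_univ
    · have : {y : EuclideanSpace ℝ (Fin d) | μ ≠ ν → 0 < z μ x * z μ y}
          = {y | 0 < z μ x * z μ y} := by
        ext y; simp [h]
      rw [this]
      exact isOpen_lt continuous_const (continuous_const.mul (hzc μ))
  have hxV : x ∈ V := by
    simp only [hV, mem_iInter, mem_setOf_eq]
    intro μ hμν
    have := hμ μ hμν
    rcases lt_or_gt_of_ne this with h | h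
    · exact mul_pos_of_neg_of_neg h h
    · exact mul_pos h h
  obtain ⟨ε₀, hε₀, hball⟩ := Metric.isOpen_iff.1 hVopen x hxV
  refine ⟨ε₀, hε₀, fun ε hε hεle => ⟨?_, ?_⟩⟩
  · intro μ hμν y hy y' hy'
    have hy : y ∈ V := hball (lt_of_lt_of_le (mem_ball.1 hy) hεle)
    have hy' : y' ∈ V := hball (lt_of_lt_of_le (mem_ball.1 hy') hεle)
    have h1 : 0 < z μ x * z μ y := by
      have := mem_iInter.1 hy μ; exact this hμν
    have h2 : 0 < z μ x * z μ y' := by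
      have := mem_iInter.1 hy' μ; exact this hμν
    constructor <;> intro h <;> nlinarith
  · intro hconst
    set t : ℝ := ε / (2 * ‖W₁ ν‖) with ht
    have hnorm : 0 < ‖W₁ ν‖ := norm_pos_iff.2 hWν
    have htpos : 0 < t := by positivity
    have hy' : x + t • W₁ ν ∈ Metric.ball x ε := by
      rw [mem_ball, dist_eq_norm, add_sub_cancel_left, norm_smul,
        Real.norm_eq_abs, abs_of_pos htpos, ht]
      exact half_lt' hε hnorm
    have hval : z ν (x + t • W₁ ν) = t * ‖W₁ ν‖ ^ 2 := by
      simp only [hz, inner_add_right, real_inner_smul_right,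
        real_inner_self_eq_norm_sq]
      linarith [hx]
    have := hconst (x + t • W₁ ν) hy' x (mem_ball_self hε)
    rw [hval] at this
    have hxz : z ν x = 0 := hx
    have h1 : 0 < t * ‖W₁ ν‖ ^ 2 := by positivity
    rw [hxz] at this
    exact lt_irrefl 0 (this.1 h1)

lemma existsPoint {d n : ℕ} (W₁ : Fin n → EuclideanSpace ℝ (Fin d)) (b₁ : Fin n → ℝ)
    (hW : ∀ ν, W₁ ν ≠ 0)
    (hcol : ∀ ν₁ ν₂, ν₁ ≠ ν₂ →
      ¬ ((∃ c : ℝ, W₁ ν₂ = c • W₁ ν₁ ∧ b₁ ν₂ = c * b₁ ν₁) ∨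
         (∃ c : ℝ, W₁ ν₁ = c • W₁ ν₂ ∧ b₁ ν₁ = c * b₁ ν₂))) (ν : Fin n) :
    ∃ x : EuclideanSpace ℝ (Fin d),
      ⟪W₁ ν, x⟫ + b₁ ν = 0 ∧ ∀ μ, μ ≠ ν → ⟪W₁ μ, x⟫ + b₁ μ ≠ 0 := by
  classical
  set S : Set (EuclideanSpace ℝ (Fin d)) := {x | ⟪W₁ ν, x⟫ + b₁ ν = 0} with hS
  have hScl : IsClosed S := by
    have : Continuous fun x : EuclideanSpace ℝ (Fin d) => ⟪W₁ ν, x⟫ + b₁ ν :=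
      (continuous_const.inner continuous_id).add continuous_const
    exact isClosed_eq this continuous_const
  have hnormν : (0:ℝ) < ‖W₁ ν‖ := norm_pos_iff.2 (hW ν)
  have hx₀ : ((-(b₁ ν) / ‖W₁ ν‖ ^ 2) • W₁ ν) ∈ S := by
    simp only [hS, mem_setOf_eq, real_inner_smul_right, real_inner_self_eq_norm_sq]
    field_simp
    ring
  by_contra hcon
  push_neg at hcon
  -- every point of S lies on some other hyperplane
  have hcov : ∀ x ∈ S, ∃ μ, μ ≠ ν ∧ ⟪W₁ μ, x⟫ + b₁ μ = 0 := by
    intro x hxS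
    obtain ⟨μ, hμν, hμz⟩ := hcon x hxS
    exact ⟨μ, hμν, hμz⟩
  haveI : CompleteSpace S := hScl.completeSpace_coe
  haveI : Nonempty S := ⟨⟨_, hx₀⟩⟩
  set f : Fin n → Set S := fun μ => {p | μ ≠ ν ∧ ⟪W₁ μ, (p : EuclideanSpace ℝ (Fin d))⟫ + b₁ μ = 0} with hf
  have hfc : ∀ μ, IsClosed (f μ) := by
    intro μ
    by_cases h : μ = ν
    · have : f μ = ∅ := by ext p; simp [hf, h]
      rw [this]; exact isClosed_empty
    · have : f μ = (fun p : S => ⟪W₁ μ, (p : EuclideanSpace ℝ (Fin d))⟫ + b₁ μ) ⁻¹' {0} := by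
        ext p; simp [hf, h]
      rw [this]
      exact IsClosed.preimage
        (((continuous_const.inner continuous_id).add continuous_const).comp
          continuous_subtype_val) isClosed_singleton
  have hfu : ⋃ μ, f μ = univ := by
    ext p
    simp only [mem_iUnion, mem_univ, iff_true, hf, mem_setOf_eq]
    exact hcov p p.2
  obtain ⟨μ, p, hp⟩ := nonempty_interior_of_iUnion_of_closed hfc hfu
  have hpf : p ∈ f μ := interior_subset hp
  obtain ⟨hμν, hμz⟩ := hpf
  obtain ⟨ε, hε, hball⟩ := Metric.isOpen_iff.1 isOpen_interior p hp
  -- direction u orthogonal to W₁ ν with ⟪W₁ μ, u⟫ = ‖u‖²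
  set c : ℝ := ⟪W₁ ν, W₁ μ⟫ / ‖W₁ ν‖ ^ 2 with hc
  set u : EuclideanSpace ℝ (Fin d) := W₁ μ - c • W₁ ν with hu
  have hνu : ⟪W₁ ν, u⟫ = 0 := by
    simp only [hu, inner_sub_right, real_inner_smul_right, hc,
      real_inner_self_eq_norm_sq]
    field_simp
    ring
  have hμu : ⟪W₁ μ, u⟫ = ‖u‖ ^ 2 := by
    have : W₁ μ = u + c • W₁ ν := by simp [hu]
    rw [this, inner_add_left, real_inner_smul_left, real_inner_self_eq_norm_sq]
    rw [hνu]; ring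
  have hune : u ≠ 0 := by
    intro h0
    have hWμ : W₁ μ = c • W₁ ν := by
      have := sub_eq_zero.1 (hu ▸ h0)
      exact this
    have hpν : ⟪W₁ ν, (p : EuclideanSpace ℝ (Fin d))⟫ = -b₁ ν := by
      have := p.2; simp only [hS, mem_setOf_eq] at this; linarith
    have hbμ : b₁ μ = c * b₁ ν := by
      have h1 : ⟪W₁ μ, (p : EuclideanSpace ℝ (Fin d))⟫ = c * ⟪W₁ ν, (p : EuclideanSpace ℝ (Fin d))⟫ := by
        rw [hWμ, real_inner_smul_left]
      rw [hpν] at h1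
      have := hμz
      rw [h1] at this
      linarith
    exact hcol ν μ (Ne.symm hμν) (Or.inl ⟨c, hWμ, hbμ⟩)
  have hunorm : (0:ℝ) < ‖u‖ := norm_pos_iff.2 hune
  set t : ℝ := ε / (2 * ‖u‖) with htdef
  have htpos : 0 < t := by positivity
  have hqS : ((p : EuclideanSpace ℝ (Fin d)) + t • u) ∈ S := by
    simp only [hS, mem_setOf_eq, inner_add_right, real_inner_smul_right, hνu]
    have := p.2; simp only [hS, mem_setOf_eq] at this; linarith
  have hqball : (⟨(p : EuclideanSpace ℝ (Fin d)) + t • u, hqS⟩ : S) ∈ Metric.ball p ε := by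
    rw [mem_ball, Subtype.dist_eq, dist_eq_norm]
    simp only [add_sub_cancel_left, norm_smul, Real.norm_eq_abs, abs_of_pos htpos]
    rw [htdef]
    exact half_lt' hε hunorm
  have hqf : (⟨(p : EuclideanSpace ℝ (Fin d)) + t • u, hqS⟩ : S) ∈ f μ := interior_subset (hball hqball)
  have : ⟪W₁ μ, (p : EuclideanSpace ℝ (Fin d)) + t • u⟫ + b₁ μ = 0 := hqf.2
  rw [inner_add_right, real_inner_smul_right, hμu] at this
  nlinarith [mul_pos htpos (pow_pos hunorm 2)]

/-- For a one-hidden-layer ReLU network `f(x) = w₂ᵀ ReLU(W₁ x + b₁) + b₂` satisfying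
the non-degeneracy assumption (every row `W₁ ν` nonzero, no two distinct augmented rows
colinear): (1) every hidden neuron is isolated (`𝔛_ν ≠ ∅`); and (2) every point `x` at
which `f` is not affine on any ball `B(x,ε)` and which lies on exactly one hyperplane
`H_ν = {y : ⟪W₁ ν, y⟫ + b₁ ν = 0}` belongs to `⋃_ν 𝔛_ν`. -/
theorem oneHiddenLayer_nondegenerate_isolated_and_frontier {d n : ℕ}
    (W₁ : Fin n → EuclideanSpace ℝ (Fin d)) (b₁ w₂ : Fin n → ℝ) (b₂ : ℝ)
    (hW : ∀ ν, W₁ ν ≠ 0)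
    (hcol : ∀ ν₁ ν₂, ν₁ ≠ ν₂ →
      ¬ ((∃ c : ℝ, W₁ ν₂ = c • W₁ ν₁ ∧ b₁ ν₂ = c * b₁ ν₁) ∨
         (∃ c : ℝ, W₁ ν₁ = c • W₁ ν₂ ∧ b₁ ν₁ = c * b₁ ν₂))) :
    (∀ ν, (Xiso (fun μ (x : EuclideanSpace ℝ (Fin d)) => ⟪W₁ μ, x⟫ + b₁ μ) ν).Nonempty) ∧
    (∀ x : EuclideanSpace ℝ (Fin d),
      (∀ ε > (0 : ℝ), ¬ ∃ (u : EuclideanSpace ℝ (Fin d)) (c : ℝ),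
        ∀ y ∈ Metric.ball x ε,
          (∑ ν, w₂ ν * relu (⟪W₁ ν, y⟫ + b₁ ν) + b₂) = ⟪u, y⟫ + c) →
      (∃! ν, ⟪W₁ ν, x⟫ + b₁ ν = 0) →
      x ∈ ⋃ ν, Xiso (fun μ (y : EuclideanSpace ℝ (Fin d)) => ⟪W₁ μ, y⟫ + b₁ μ) ν) := by
  constructor
  · intro ν
    obtain ⟨x, hx, hμ⟩ := existsPoint W₁ b₁ hW hcol ν
    exact ⟨x, memXiso W₁ b₁ ν (hW ν) x hx hμ⟩
  · intro x _ hx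
    obtain ⟨ν, hν, huniq⟩ := hx
    refine mem_iUnion.2 ⟨ν, memXiso W₁ b₁ ν (hW ν) x hν ?_⟩
    intro μ hμν h
    exact hμν (huniq μ h)
end
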